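/- Embedding-projection pairs compose: in CBPV*, (1) if (V₁, S₁) is a value ep pair from A₁ to A₂ and (V₂, S₂) is a value ep pair from A₂ to A₃, then (V₂[V₁], S₁[S₂]) is a value ep pair from A₁ to A₃; and (2) if (V₁, S₁) is a computation ep pair from B₁ to B₂ and (V₂, S₂) is a computation ep pair from B₂ to B₃, then (V₂[V₁], S₁[S₂]) is a computation ep pair from B₁ to B₃. -/

import Mathlib

set_option autoImplicit true
set_option maxHeartbeats 1000000

namespace GTTPaper

/-! ## Syntax of value and computation types.

Value types `A ::= ? | 0 | 1 | A + A | A × A | U B` and computation types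
`B ::= ¿ | ⊤ | B & B | A → B | F A`, together with (co)recursive types
`μX.A`/`νY.B` and type variables, which are used only by the CBPV* fragment. -/

mutual
inductive VTy : Type
| dyn : VTy                      -- the dynamic value type ?
| zero : VTy
| one : VTy
| sum : VTy → VTy → VTy
| prod : VTy → VTy → VTy
| U : CTy → VTy
| tvarV : Nat → VTy              -- value type variable (CBPV* only)
| mu : VTy → VTy                 -- recursive value type (CBPV* only)
inductive CTy : Type
| dync : CTy                     -- the dynamic computation type ¿
| top : CTy
| wth : CTy → CTy → CTy          -- lazy product B & B
| arr : VTy → CTy → CTy          -- A → B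
| F : VTy → CTy
| tvarC : Nat → CTy              -- computation type variable (CBPV* only)
| nu : CTy → CTy                 -- corecursive computation type (CBPV* only)
end

def liftN (f : Nat → Nat) : Nat → Nat
| 0 => 0
| n+1 => f n + 1

mutual
def renVTy (fv fc : Nat → Nat) : VTy → VTy
| .dyn => .dyn
| .zero => .zero
| .one => .one
| .sum A A' => .sum (renVTy fv fc A) (renVTy fv fc A')
| .prod A A' => .prod (renVTy fv fc A) (renVTy fv fc A')
| .U B => .U (renCTy fv fc B)
| .tvarV n => .tvarV (fv n)
| .mu A => .mu (renVTy (liftN fv) fc A)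
def renCTy (fv fc : Nat → Nat) : CTy → CTy
| .dync => .dync
| .top => .top
| .wth B B' => .wth (renCTy fv fc B) (renCTy fv fc B')
| .arr A B => .arr (renVTy fv fc A) (renCTy fv fc B)
| .F A => .F (renVTy fv fc A)
| .tvarC n => .tvarC (fc n)
| .nu B => .nu (renCTy fv (liftN fc) B)
end

def liftSubVV (σv : Nat → VTy) : Nat → VTy
| 0 => .tvarV 0
| n+1 => renVTy Nat.succ id (σv n)
def liftSubVC (σc : Nat → CTy) : Nat → CTy := fun n => renCTy Nat.succ id (σc n)
def liftSubCV (σv : Nat → VTy) : Nat → VTy := fun n => renVTy id Nat.succ (σv n)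
def liftSubCC (σc : Nat → CTy) : Nat → CTy
| 0 => .tvarC 0
| n+1 => renCTy id Nat.succ (σc n)

mutual
def subVTy (σv : Nat → VTy) (σc : Nat → CTy) : VTy → VTy
| .dyn => .dyn
| .zero => .zero
| .one => .one
| .sum A A' => .sum (subVTy σv σc A) (subVTy σv σc A')
| .prod A A' => .prod (subVTy σv σc A) (subVTy σv σc A')
| .U B => .U (subCTy σv σc B)
| .tvarV n => σv n
| .mu A => .mu (subVTy (liftSubVV σv) (liftSubVC σc) A)
def subCTy (σv : Nat → VTy) (σc : Nat → CTy) : CTy → CTy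
| .dync => .dync
| .top => .top
| .wth B B' => .wth (subCTy σv σc B) (subCTy σv σc B')
| .arr A B => .arr (subVTy σv σc A) (subCTy σv σc B)
| .F A => .F (subVTy σv σc A)
| .tvarC n => σc n
| .nu B => .nu (subCTy (liftSubCV σv) (liftSubCC σc) B)
end

/-- The one-step unfolding `A[μX.A/X]` of the recursive type `μX.A`. -/
def muUnfold (A : VTy) : VTy :=
  subVTy (fun n => match n with | 0 => .mu A | n+1 => .tvarV n) (fun n => .tvarC n) A
/-- The one-step unfolding `B[νY.B/Y]` of the corecursive type `νY.B`. -/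
def nuUnfold (B : CTy) : CTy :=
  subCTy (fun n => .tvarV n) (fun n => match n with | 0 => .nu B | n+1 => .tvarC n) B

-- A "basic" (GTT) type: one not mentioning (co)recursive types or type variables.
mutual
def VTy.basic : VTy → Prop
| .dyn => True
| .zero => True
| .one => True
| .sum A A' => A.basic ∧ A'.basic
| .prod A A' => A.basic ∧ A'.basic
| .U B => B.basic
| .tvarV _ => False
| .mu _ => False
def CTy.basic : CTy → Prop
| .dync => True
| .top => True
| .wth B B' => B.basic ∧ B'.basic
| .arr A B => A.basic ∧ B.basic
| .F A => A.basic
| .tvarC _ => False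
| .nu _ => False
end

/-! ## Type dynamism A ⊑ A', B ⊑ B' : the least reflexive transitive congruence
with `A ⊑ ?` and `B ⊑ ¿` for every (GTT) type. -/

mutual
inductive VDyn : VTy → VTy → Prop
| refl (A : VTy) : VDyn A A
| trans : VDyn A A' → VDyn A' A'' → VDyn A A''
| dyn : VTy.basic A → VDyn A .dyn
| sum : VDyn A₁ A₁' → VDyn A₂ A₂' → VDyn (.sum A₁ A₂) (.sum A₁' A₂')
| prod : VDyn A₁ A₁' → VDyn A₂ A₂' → VDyn (.prod A₁ A₂) (.prod A₁' A₂')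
| U : CDyn B B' → VDyn (.U B) (.U B')
inductive CDyn : CTy → CTy → Prop
| refl (B : CTy) : CDyn B B
| trans : CDyn B B' → CDyn B' B'' → CDyn B B''
| dync : CTy.basic B → CDyn B .dync
| wth : CDyn B₁ B₁' → CDyn B₂ B₂' → CDyn (.wth B₁ B₂) (.wth B₁' B₂')
| arr : VDyn A A' → CDyn B B' → CDyn (.arr A B) (.arr A' B')
| F : VDyn A A' → CDyn (.F A) (.F A')
end

/-! ## Term syntax: complex values `V`, and computations/stacks `M`,`S`.

Terms are raw, with de Bruijn indices for value variables and a single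
distinguished stack hole `•`.  The cast terms `⟨A'↢A⟩V` (`up`) and `⟨B↞B'⟩M`
(`dn`) record their types. -/

mutual
inductive Val : Type
| var : Nat → Val
| up : VTy → VTy → Val → Val          -- ⟨A'↢A⟩V  (up A A' V)
| unit : Val                           -- ()
| inl : Val → Val
| inr : Val → Val
| pair : Val → Val → Val
| abortV : Val → Val                   -- abort V (complex value)
| caseV : Val → Val → Val → Val        -- case V of {x₁.W₁ | x₂.W₂} (branches bind 1 var)
| splitPV : Val → Val → Val            -- split V to (x,y).W  (body binds 2 vars: 1 = x, 0 = y)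
| splitUV : Val → Val → Val            -- split V to ().W
| rollV : VTy → Val → Val              -- roll_{μX.A} V
| unrollPV : Val → Val → Val           -- pm V as roll x. W (body binds 1 var)
| thunk : Comp → Val
inductive Comp : Type
| hole : Comp                          -- the stack hole •
| err : Comp                           -- ℧
| dn : CTy → CTy → Comp → Comp         -- ⟨B↞B'⟩M  (dn B B' M)
| force : Val → Comp
| ret : Val → Comp
| bind : Comp → Comp → Comp            -- bind M (x. N)
| lam : Comp → Comp                    -- λx.M
| app : Comp → Val → Comp
| unitC : Comp                         -- {}
| pairC : Comp → Comp → Comp           -- ⟨M₁, M₂⟩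
| fst : Comp → Comp                    -- π
| snd : Comp → Comp                    -- π'
| abortC : Val → Comp                 -- abort V (computation)
| caseC : Val → Comp → Comp → Comp     -- case V of {x₁.M₁ | x₂.M₂}
| splitPC : Val → Comp → Comp
| splitUC : Val → Comp → Comp
| unrollPC : Val → Comp → Comp
| rollC : CTy → Comp → Comp            -- roll_{νY.B} M
| unrollC : Comp → Comp
end

/-! ### Renaming, substitution and plugging of stacks. -/

mutual
def renV (f : Nat → Nat) : Val → Val
| .var n => .var (f n)
| .up A A' V => .up A A' (renV f V)
| .unit => .unit
| .inl V => .inl (renV f V)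
| .inr V => .inr (renV f V)
| .pair V W => .pair (renV f V) (renV f W)
| .abortV V => .abortV (renV f V)
| .caseV V W₁ W₂ => .caseV (renV f V) (renV (liftN f) W₁) (renV (liftN f) W₂)
| .splitPV V W => .splitPV (renV f V) (renV (liftN (liftN f)) W)
| .splitUV V W => .splitUV (renV f V) (renV f W)
| .rollV T V => .rollV T (renV f V)
| .unrollPV V W => .unrollPV (renV f V) (renV (liftN f) W)
| .thunk M => .thunk (renC f M)
def renC (f : Nat → Nat) : Comp → Comp
| .hole => .hole
| .err => .err
| .dn B B' M => .dn B B' (renC f M)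
| .force V => .force (renV f V)
| .ret V => .ret (renV f V)
| .bind M N => .bind (renC f M) (renC (liftN f) N)
| .lam M => .lam (renC (liftN f) M)
| .app M V => .app (renC f M) (renV f V)
| .unitC => .unitC
| .pairC M N => .pairC (renC f M) (renC f N)
| .fst M => .fst (renC f M)
| .snd M => .snd (renC f M)
| .abortC V => .abortC (renV f V)
| .caseC V M₁ M₂ => .caseC (renV f V) (renC (liftN f) M₁) (renC (liftN f) M₂)
| .splitPC V M => .splitPC (renV f V) (renC (liftN (liftN f)) M)
| .splitUC V M => .splitUC (renV f V) (renC f M)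
| .unrollPC V M => .unrollPC (renV f V) (renC (liftN f) M)
| .rollC T M => .rollC T (renC f M)
| .unrollC M => .unrollC (renC f M)
end

def liftSub (σ : Nat → Val) : Nat → Val
| 0 => .var 0
| n+1 => renV Nat.succ (σ n)

mutual
def subV (σ : Nat → Val) : Val → Val
| .var n => σ n
| .up A A' V => .up A A' (subV σ V)
| .unit => .unit
| .inl V => .inl (subV σ V)
| .inr V => .inr (subV σ V)
| .pair V W => .pair (subV σ V) (subV σ W)
| .abortV V => .abortV (subV σ V)
| .caseV V W₁ W₂ => .caseV (subV σ V) (subV (liftSub σ) W₁) (subV (liftSub σ) W₂)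
| .splitPV V W => .splitPV (subV σ V) (subV (liftSub (liftSub σ)) W)
| .splitUV V W => .splitUV (subV σ V) (subV σ W)
| .rollV T V => .rollV T (subV σ V)
| .unrollPV V W => .unrollPV (subV σ V) (subV (liftSub σ) W)
| .thunk M => .thunk (subC σ M)
def subC (σ : Nat → Val) : Comp → Comp
| .hole => .hole
| .err => .err
| .dn B B' M => .dn B B' (subC σ M)
| .force V => .force (subV σ V)
| .ret V => .ret (subV σ V)
| .bind M N => .bind (subC σ M) (subC (liftSub σ) N)
| .lam M => .lam (subC (liftSub σ) M)
| .app M V => .app (subC σ M) (subV σ V)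
| .unitC => .unitC
| .pairC M N => .pairC (subC σ M) (subC σ N)
| .fst M => .fst (subC σ M)
| .snd M => .snd (subC σ M)
| .abortC V => .abortC (subV σ V)
| .caseC V M₁ M₂ => .caseC (subV σ V) (subC (liftSub σ) M₁) (subC (liftSub σ) M₂)
| .splitPC V M => .splitPC (subV σ V) (subC (liftSub (liftSub σ)) M)
| .splitUC V M => .splitUC (subV σ V) (subC σ M)
| .unrollPC V M => .unrollPC (subV σ V) (subC (liftSub σ) M)
| .rollC T M => .rollC T (subC σ M)
| .unrollC M => .unrollC (subC σ M)
end

def sub0 (V : Val) : Nat → Val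
| 0 => V
| n+1 => .var n
/-- Single substitution `W[V/x₀]` in a value. -/
def sub0V (V : Val) (W : Val) : Val := subV (sub0 V) W
/-- Single substitution `M[V/x₀]` in a computation. -/
def sub0C (V : Val) (M : Comp) : Comp := subC (sub0 V) M
def sub2 (V₁ V₂ : Val) : Nat → Val
| 0 => V₂
| 1 => V₁
| n+2 => .var n
/-- Substitution `M[V₁/x₁, V₂/x₀]` for the two variables bound by a pair split. -/
def sub2C (V₁ V₂ : Val) (M : Comp) : Comp := subC (sub2 V₁ V₂) M

mutual
def plugV (M : Comp) (d : Nat) : Val → Val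
| .var n => .var n
| .up A A' V => .up A A' (plugV M d V)
| .unit => .unit
| .inl V => .inl (plugV M d V)
| .inr V => .inr (plugV M d V)
| .pair V W => .pair (plugV M d V) (plugV M d W)
| .abortV V => .abortV (plugV M d V)
| .caseV V W₁ W₂ => .caseV (plugV M d V) (plugV M (d+1) W₁) (plugV M (d+1) W₂)
| .splitPV V W => .splitPV (plugV M d V) (plugV M (d+2) W)
| .splitUV V W => .splitUV (plugV M d V) (plugV M d W)
| .rollV T V => .rollV T (plugV M d V)
| .unrollPV V W => .unrollPV (plugV M d V) (plugV M (d+1) W)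
| .thunk N => .thunk (plugC M d N)
def plugC (M : Comp) (d : Nat) : Comp → Comp
| .hole => renC (· + d) M
| .err => .err
| .dn B B' N => .dn B B' (plugC M d N)
| .force V => .force (plugV M d V)
| .ret V => .ret (plugV M d V)
| .bind N₁ N₂ => .bind (plugC M d N₁) (plugC M (d+1) N₂)
| .lam N => .lam (plugC M (d+1) N)
| .app N V => .app (plugC M d N) (plugV M d V)
| .unitC => .unitC
| .pairC N₁ N₂ => .pairC (plugC M d N₁) (plugC M d N₂)
| .fst N => .fst (plugC M d N)
| .snd N => .snd (plugC M d N)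
| .abortC V => .abortC (plugV M d V)
| .caseC V N₁ N₂ => .caseC (plugV M d V) (plugC M (d+1) N₁) (plugC M (d+1) N₂)
| .splitPC V N => .splitPC (plugV M d V) (plugC M (d+2) N)
| .splitUC V N => .splitUC (plugV M d V) (plugC M d N)
| .unrollPC V N => .unrollPC (plugV M d V) (plugC M (d+1) N)
| .rollC T N => .rollC T (plugC M d N)
| .unrollC N => .unrollC (plugC M d N)
end

/-- `plug S M` plugs the computation `M` into the hole `•` of the stack `S`
(shifting the free variables of `M` past any binders of `S`). -/
def plug (S M : Comp) : Comp := plugC M 0 S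

/-! ## Theories.

A `Policy` determines a particular theory over the shared syntax:
* `up`/`dn` say which primitive casts the theory has
  (GTT: all casts along type dynamism; GTT_G: only ground casts; CBPV*/CBPV: none),
* `recty` says whether (co)recursive types are present (CBPV*/CBPV only),
* `cx` says whether complex values and complex stacks are permitted
  (everywhere except operational CBPV). -/

structure Policy : Type where
  up : VTy → VTy → Prop
  dn : CTy → CTy → Prop
  recty : Prop
  cx : Prop

abbrev Ctx := List VTy

/-- Pointwise type dynamism of contexts, `Φ : Γ ⊑ Γ'`. -/
def CtxDyn : Ctx → Ctx → Prop := List.Forall₂ VDyn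

/-- Dynamism of stoups, `Ψ : Δ ⊑ Δ'`. -/
def StoupDyn : Option CTy → Option CTy → Prop
| none, none => True
| some B, some B' => CDyn B B'
| _, _ => False

/-- Stoup condition for the complex-stack forming rules: the rule forms a
complex stack when the stoup is nonempty, which requires `P.cx`. -/
def StoupOK (P : Policy) : Option CTy → Prop := fun Δ => Δ = none ∨ P.cx

/-! ## Typing: `Γ ⊢ V : A` and `Γ | Δ ⊢ M : B`. -/

mutual
inductive VTyping (P : Policy) : Ctx → Val → VTy → Prop
| var {Γ : Ctx} {n : Nat} {A : VTy} :
    Γ[n]? = some A → VTyping P Γ (.var n) A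
| up : P.up A A' → VTyping P Γ V A → VTyping P Γ (.up A A' V) A'
| unit : VTyping P Γ .unit .one
| inl : VTyping P Γ V A₁ → VTyping P Γ (.inl V) (.sum A₁ A₂)
| inr : VTyping P Γ V A₂ → VTyping P Γ (.inr V) (.sum A₁ A₂)
| pair : VTyping P Γ V₁ A₁ → VTyping P Γ V₂ A₂ → VTyping P Γ (.pair V₁ V₂) (.prod A₁ A₂)
| abortV : P.cx → VTyping P Γ V .zero → VTyping P Γ (.abortV V) A
| caseV : P.cx → VTyping P Γ V (.sum A₁ A₂) → VTyping P (A₁::Γ) W₁ C →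
    VTyping P (A₂::Γ) W₂ C → VTyping P Γ (.caseV V W₁ W₂) C
| splitPV : P.cx → VTyping P Γ V (.prod A₁ A₂) → VTyping P (A₂::A₁::Γ) W C →
    VTyping P Γ (.splitPV V W) C
| splitUV : P.cx → VTyping P Γ V .one → VTyping P Γ W C → VTyping P Γ (.splitUV V W) C
| rollV : P.recty → VTyping P Γ V (muUnfold A) → VTyping P Γ (.rollV (.mu A) V) (.mu A)
| unrollPV : P.cx → P.recty → VTyping P Γ V (.mu A) →
    VTyping P ((muUnfold A)::Γ) W C → VTyping P Γ (.unrollPV V W) C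
| thunk : CTyping P Γ none M B → VTyping P Γ (.thunk M) (.U B)
inductive CTyping (P : Policy) : Ctx → Option CTy → Comp → CTy → Prop
| hole : CTyping P Γ (some B) .hole B
| err : CTyping P Γ none .err B
| dn : P.dn B B' → CTyping P Γ Δ M B' → CTyping P Γ Δ (.dn B B' M) B
| force : VTyping P Γ V (.U B) → CTyping P Γ none (.force V) B
| ret : VTyping P Γ V A → CTyping P Γ none (.ret V) (.F A)
| bind : CTyping P Γ Δ M (.F A) → CTyping P (A::Γ) none N B →
    CTyping P Γ Δ (.bind M N) B
| lam : StoupOK P Δ → CTyping P (A::Γ) Δ M B → CTyping P Γ Δ (.lam M) (.arr A B)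
| app : CTyping P Γ Δ M (.arr A B) → VTyping P Γ V A → CTyping P Γ Δ (.app M V) B
| unitC : StoupOK P Δ → CTyping P Γ Δ .unitC .top
| pairC : StoupOK P Δ → CTyping P Γ Δ M₁ B₁ → CTyping P Γ Δ M₂ B₂ →
    CTyping P Γ Δ (.pairC M₁ M₂) (.wth B₁ B₂)
| fst : CTyping P Γ Δ M (.wth B₁ B₂) → CTyping P Γ Δ (.fst M) B₁
| snd : CTyping P Γ Δ M (.wth B₁ B₂) → CTyping P Γ Δ (.snd M) B₂
| abortC : StoupOK P Δ → VTyping P Γ V .zero → CTyping P Γ Δ (.abortC V) B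
| caseC : StoupOK P Δ → VTyping P Γ V (.sum A₁ A₂) → CTyping P (A₁::Γ) Δ M₁ B →
    CTyping P (A₂::Γ) Δ M₂ B → CTyping P Γ Δ (.caseC V M₁ M₂) B
| splitPC : StoupOK P Δ → VTyping P Γ V (.prod A₁ A₂) → CTyping P (A₂::A₁::Γ) Δ M B →
    CTyping P Γ Δ (.splitPC V M) B
| splitUC : StoupOK P Δ → VTyping P Γ V .one → CTyping P Γ Δ M B →
    CTyping P Γ Δ (.splitUC V M) B
| unrollPC : StoupOK P Δ → P.recty → VTyping P Γ V (.mu A) →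
    CTyping P ((muUnfold A)::Γ) Δ M B → CTyping P Γ Δ (.unrollPC V M) B
| rollC : P.recty → CTyping P Γ Δ M (nuUnfold B) → CTyping P Γ Δ (.rollC (.nu B) M) (.nu B)
| unrollC : P.recty → CTyping P Γ Δ M (.nu B) → CTyping P Γ Δ (.unrollC M) (nuUnfold B)
end

/-! ### Substitutions used to state the η laws. -/

/-- `E[inl x₁/x]` where `x` is variable 0 and `x₁` the freshly bound variable. -/
def etaSumL : Nat → Val
| 0 => .inl (.var 0)
| n+1 => .var (n+2)
def etaSumR : Nat → Val
| 0 => .inr (.var 0)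
| n+1 => .var (n+2)
/-- `E[(x₁,x₂)/x]` in the body of a pair split. -/
def etaProd : Nat → Val
| 0 => .pair (.var 1) (.var 0)
| n+1 => .var (n+3)
/-- `E[()/x]`. -/
def etaOne : Nat → Val
| 0 => .unit
| n+1 => .var (n+1)
/-- `E[roll y/x]`. -/
def etaMu (A : VTy) : Nat → Val
| 0 => .rollV (.mu A) (.var 0)
| n+1 => .var (n+2)

/-! ## Term dynamism.

`VLe P Γ Γ' V V' A A'` is the heterogeneous term dynamism judgement
`Γ ⊑ Γ' ⊢ V ⊑ V' : A ⊑ A'`, and `CLe P Γ Γ' Δ Δ' M M' B B'` is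
`Γ ⊑ Γ' | Δ ⊑ Δ' ⊢ M ⊑ M' : B ⊑ B'`.  It is the least relation closed under
reflexivity, transitivity, substitution and congruence for all term
constructors, together with the βη laws of each connective (in both
directions), the error axioms (℧ is a least element and stacks are strict in
errors), the universal-property axioms for the casts provided by the policy,
and the retract axioms. -/

mutual
inductive VLe (P : Policy) : Ctx → Ctx → Val → Val → VTy → VTy → Prop
-- structural rules
| refl : VTyping P Γ V A → VLe P Γ Γ V V A A
| trans : VLe P Γ Γ' V V' A A' → VLe P Γ' Γ'' V' V'' A' A'' → VLe P Γ Γ'' V V'' A A''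
| var {Γ Γ' : Ctx} {n : Nat} {A A' : VTy} : CtxDyn Γ Γ' →
    Γ[n]? = some A → Γ'[n]? = some A' → VLe P Γ Γ' (.var n) (.var n) A A'
| substVV : VLe P Γ Γ' V V' A A' → VLe P (A::Γ) (A'::Γ') W W' C C' →
    VLe P Γ Γ' (sub0V V W) (sub0V V' W') C C'
-- congruence rules
| inlCong : VLe P Γ Γ' V V' A₁ A₁' → VDyn A₂ A₂' →
    VLe P Γ Γ' (.inl V) (.inl V') (.sum A₁ A₂) (.sum A₁' A₂')
| inrCong : VDyn A₁ A₁' → VLe P Γ Γ' V V' A₂ A₂' →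
    VLe P Γ Γ' (.inr V) (.inr V') (.sum A₁ A₂) (.sum A₁' A₂')
| unitCong : CtxDyn Γ Γ' → VLe P Γ Γ' .unit .unit .one .one
| pairCong : VLe P Γ Γ' V₁ V₁' A₁ A₁' → VLe P Γ Γ' V₂ V₂' A₂ A₂' →
    VLe P Γ Γ' (.pair V₁ V₂) (.pair V₁' V₂') (.prod A₁ A₂) (.prod A₁' A₂')
| thunkCong : CLe P Γ Γ' none none M M' B B' →
    VLe P Γ Γ' (.thunk M) (.thunk M') (.U B) (.U B')
| abortVCong : P.cx → VDyn C C' → VLe P Γ Γ' V V' .zero .zero →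
    VLe P Γ Γ' (.abortV V) (.abortV V') C C'
| caseVCong : P.cx → VLe P Γ Γ' V V' (.sum A₁ A₂) (.sum A₁' A₂') →
    VLe P (A₁::Γ) (A₁'::Γ') W₁ W₁' C C' → VLe P (A₂::Γ) (A₂'::Γ') W₂ W₂' C C' →
    VLe P Γ Γ' (.caseV V W₁ W₂) (.caseV V' W₁' W₂') C C'
| splitPVCong : P.cx → VLe P Γ Γ' V V' (.prod A₁ A₂) (.prod A₁' A₂') →
    VLe P (A₂::A₁::Γ) (A₂'::A₁'::Γ') W W' C C' →
    VLe P Γ Γ' (.splitPV V W) (.splitPV V' W') C C'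
| splitUVCong : P.cx → VLe P Γ Γ' V V' .one .one → VLe P Γ Γ' W W' C C' →
    VLe P Γ Γ' (.splitUV V W) (.splitUV V' W') C C'
| rollVCong : P.recty → VLe P Γ Γ' V V' (muUnfold A) (muUnfold A) →
    VLe P Γ Γ' (.rollV (.mu A) V) (.rollV (.mu A) V') (.mu A) (.mu A)
| unrollPVCong : P.cx → P.recty → VLe P Γ Γ' V V' (.mu A) (.mu A) →
    VLe P ((muUnfold A)::Γ) ((muUnfold A)::Γ') W W' C C' →
    VLe P Γ Γ' (.unrollPV V W) (.unrollPV V' W') C C'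
-- universal property axioms for value upcasts
| upBound : P.up A A' → VLe P [A] [A] (.var 0) (.up A A' (.var 0)) A A'
| upBest : P.up A A' → VLe P [A] [A'] (.up A A' (.var 0)) (.var 0) A' A'
-- βη laws (value versions)
| sumVBetaL : P.cx → VTyping P Γ V A₁ → VTyping P (A₁::Γ) W₁ C → VTyping P (A₂::Γ) W₂ C →
    VLe P Γ Γ (.caseV (.inl V) W₁ W₂) (sub0V V W₁) C C
| sumVBetaL' : P.cx → VTyping P Γ V A₁ → VTyping P (A₁::Γ) W₁ C → VTyping P (A₂::Γ) W₂ C →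
    VLe P Γ Γ (sub0V V W₁) (.caseV (.inl V) W₁ W₂) C C
| sumVBetaR : P.cx → VTyping P Γ V A₂ → VTyping P (A₁::Γ) W₁ C → VTyping P (A₂::Γ) W₂ C →
    VLe P Γ Γ (.caseV (.inr V) W₁ W₂) (sub0V V W₂) C C
| sumVBetaR' : P.cx → VTyping P Γ V A₂ → VTyping P (A₁::Γ) W₁ C → VTyping P (A₂::Γ) W₂ C →
    VLe P Γ Γ (sub0V V W₂) (.caseV (.inr V) W₁ W₂) C C
| sumVEta : P.cx → VTyping P (.sum A₁ A₂ :: Γ) W C →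
    VLe P (.sum A₁ A₂ :: Γ) (.sum A₁ A₂ :: Γ) W
      (.caseV (.var 0) (subV etaSumL W) (subV etaSumR W)) C C
| sumVEta' : P.cx → VTyping P (.sum A₁ A₂ :: Γ) W C →
    VLe P (.sum A₁ A₂ :: Γ) (.sum A₁ A₂ :: Γ)
      (.caseV (.var 0) (subV etaSumL W) (subV etaSumR W)) W C C
| zeroVEta : P.cx → VTyping P (.zero :: Γ) W C →
    VLe P (.zero :: Γ) (.zero :: Γ) W (.abortV (.var 0)) C C
| zeroVEta' : P.cx → VTyping P (.zero :: Γ) W C →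
    VLe P (.zero :: Γ) (.zero :: Γ) (.abortV (.var 0)) W C C
| prodVBeta : P.cx → VTyping P Γ V₁ A₁ → VTyping P Γ V₂ A₂ → VTyping P (A₂::A₁::Γ) W C →
    VLe P Γ Γ (.splitPV (.pair V₁ V₂) W) (subV (sub2 V₁ V₂) W) C C
| prodVBeta' : P.cx → VTyping P Γ V₁ A₁ → VTyping P Γ V₂ A₂ → VTyping P (A₂::A₁::Γ) W C →
    VLe P Γ Γ (subV (sub2 V₁ V₂) W) (.splitPV (.pair V₁ V₂) W) C C
| prodVEta : P.cx → VTyping P (.prod A₁ A₂ :: Γ) W C →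
    VLe P (.prod A₁ A₂ :: Γ) (.prod A₁ A₂ :: Γ) W (.splitPV (.var 0) (subV etaProd W)) C C
| prodVEta' : P.cx → VTyping P (.prod A₁ A₂ :: Γ) W C →
    VLe P (.prod A₁ A₂ :: Γ) (.prod A₁ A₂ :: Γ) (.splitPV (.var 0) (subV etaProd W)) W C C
| oneVBeta : P.cx → VTyping P Γ W C → VLe P Γ Γ (.splitUV .unit W) W C C
| oneVBeta' : P.cx → VTyping P Γ W C → VLe P Γ Γ W (.splitUV .unit W) C C
| oneVEta : P.cx → VTyping P (.one :: Γ) W C →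
    VLe P (.one :: Γ) (.one :: Γ) W (.splitUV (.var 0) (subV etaOne W)) C C
| oneVEta' : P.cx → VTyping P (.one :: Γ) W C →
    VLe P (.one :: Γ) (.one :: Γ) (.splitUV (.var 0) (subV etaOne W)) W C C
| muVBeta : P.cx → P.recty → VTyping P Γ V (muUnfold A) → VTyping P ((muUnfold A)::Γ) W C →
    VLe P Γ Γ (.unrollPV (.rollV (.mu A) V) W) (sub0V V W) C C
| muVBeta' : P.cx → P.recty → VTyping P Γ V (muUnfold A) → VTyping P ((muUnfold A)::Γ) W C →
    VLe P Γ Γ (sub0V V W) (.unrollPV (.rollV (.mu A) V) W) C C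
| muVEta : P.cx → P.recty → VTyping P (.mu A :: Γ) W C →
    VLe P (.mu A :: Γ) (.mu A :: Γ) W (.unrollPV (.var 0) (subV (etaMu A) W)) C C
| muVEta' : P.cx → P.recty → VTyping P (.mu A :: Γ) W C →
    VLe P (.mu A :: Γ) (.mu A :: Γ) (.unrollPV (.var 0) (subV (etaMu A) W)) W C C
| uEta : VTyping P Γ V (.U B) → VLe P Γ Γ V (.thunk (.force V)) (.U B) (.U B)
| uEta' : VTyping P Γ V (.U B) → VLe P Γ Γ (.thunk (.force V)) V (.U B) (.U B)
inductive CLe (P : Policy) : Ctx → Ctx → Option CTy → Option CTy → Comp → Comp → CTy → CTy → Prop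
-- structural rules
| refl : CTyping P Γ Δ M B → CLe P Γ Γ Δ Δ M M B B
| trans : CLe P Γ Γ' Δ Δ' M M' B B' → CLe P Γ' Γ'' Δ' Δ'' M' M'' B' B'' →
    CLe P Γ Γ'' Δ Δ'' M M'' B B''
| hole : CtxDyn Γ Γ' → CDyn B B' → CLe P Γ Γ' (some B) (some B') .hole .hole B B'
| substVC : VLe P Γ Γ' V V' A A' → CLe P (A::Γ) (A'::Γ') Δ Δ' M M' B B' →
    CLe P Γ Γ' Δ Δ' (sub0C V M) (sub0C V' M') B B'
| plugCong : CLe P Γ Γ' Δ Δ' M M' B₁ B₁' →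
    CLe P Γ Γ' (some B₁) (some B₁') S S' B₂ B₂' →
    CLe P Γ Γ' Δ Δ' (plug S M) (plug S' M') B₂ B₂'
-- error axioms
| errBot : CtxDyn Γ Γ' → CDyn B B' → CTyping P Γ' none M' B' →
    CLe P Γ Γ' none none .err M' B B'
| errStrict : CTyping P Γ (some B) S B' → CLe P Γ Γ none none (plug S .err) .err B' B'
-- congruence rules
| forceCong : VLe P Γ Γ' V V' (.U B) (.U B') → CLe P Γ Γ' none none (.force V) (.force V') B B'
| retCong : VLe P Γ Γ' V V' A A' → CLe P Γ Γ' none none (.ret V) (.ret V') (.F A) (.F A')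
| bindCong : CLe P Γ Γ' Δ Δ' M M' (.F A) (.F A') → CLe P (A::Γ) (A'::Γ') none none N N' B B' →
    CLe P Γ Γ' Δ Δ' (.bind M N) (.bind M' N') B B'
| lamCong : StoupOK P Δ → VDyn A A' → CLe P (A::Γ) (A'::Γ') Δ Δ' M M' B B' →
    CLe P Γ Γ' Δ Δ' (.lam M) (.lam M') (.arr A B) (.arr A' B')
| appCong : CLe P Γ Γ' Δ Δ' M M' (.arr A B) (.arr A' B') → VLe P Γ Γ' V V' A A' →
    CLe P Γ Γ' Δ Δ' (.app M V) (.app M' V') B B'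
| unitCCong : StoupOK P Δ → CtxDyn Γ Γ' → StoupDyn Δ Δ' →
    CLe P Γ Γ' Δ Δ' .unitC .unitC .top .top
| pairCCong : StoupOK P Δ → CLe P Γ Γ' Δ Δ' M₁ M₁' B₁ B₁' → CLe P Γ Γ' Δ Δ' M₂ M₂' B₂ B₂' →
    CLe P Γ Γ' Δ Δ' (.pairC M₁ M₂) (.pairC M₁' M₂') (.wth B₁ B₂) (.wth B₁' B₂')
| fstCong : CLe P Γ Γ' Δ Δ' M M' (.wth B₁ B₂) (.wth B₁' B₂') →
    CLe P Γ Γ' Δ Δ' (.fst M) (.fst M') B₁ B₁'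
| sndCong : CLe P Γ Γ' Δ Δ' M M' (.wth B₁ B₂) (.wth B₁' B₂') →
    CLe P Γ Γ' Δ Δ' (.snd M) (.snd M') B₂ B₂'
| abortCCong : StoupOK P Δ → StoupDyn Δ Δ' → CDyn B B' → VLe P Γ Γ' V V' .zero .zero →
    CLe P Γ Γ' Δ Δ' (.abortC V) (.abortC V') B B'
| caseCCong : StoupOK P Δ → VLe P Γ Γ' V V' (.sum A₁ A₂) (.sum A₁' A₂') →
    CLe P (A₁::Γ) (A₁'::Γ') Δ Δ' M₁ M₁' B B' → CLe P (A₂::Γ) (A₂'::Γ') Δ Δ' M₂ M₂' B B' →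
    CLe P Γ Γ' Δ Δ' (.caseC V M₁ M₂) (.caseC V' M₁' M₂') B B'
| splitPCCong : StoupOK P Δ → VLe P Γ Γ' V V' (.prod A₁ A₂) (.prod A₁' A₂') →
    CLe P (A₂::A₁::Γ) (A₂'::A₁'::Γ') Δ Δ' M M' B B' →
    CLe P Γ Γ' Δ Δ' (.splitPC V M) (.splitPC V' M') B B'
| splitUCCong : StoupOK P Δ → VLe P Γ Γ' V V' .one .one → CLe P Γ Γ' Δ Δ' M M' B B' →
    CLe P Γ Γ' Δ Δ' (.splitUC V M) (.splitUC V' M') B B'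
| unrollPCCong : StoupOK P Δ → P.recty → VLe P Γ Γ' V V' (.mu A) (.mu A) →
    CLe P ((muUnfold A)::Γ) ((muUnfold A)::Γ') Δ Δ' M M' B B' →
    CLe P Γ Γ' Δ Δ' (.unrollPC V M) (.unrollPC V' M') B B'
| rollCCong : P.recty → CLe P Γ Γ' Δ Δ' M M' (nuUnfold B) (nuUnfold B) →
    CLe P Γ Γ' Δ Δ' (.rollC (.nu B) M) (.rollC (.nu B) M') (.nu B) (.nu B)
| unrollCCong : P.recty → CLe P Γ Γ' Δ Δ' M M' (.nu B) (.nu B) →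
    CLe P Γ Γ' Δ Δ' (.unrollC M) (.unrollC M') (nuUnfold B) (nuUnfold B)
-- universal property axioms for stack downcasts
| dnBound : P.dn B B' → CLe P [] [] (some B') (some B') (.dn B B' .hole) .hole B B'
| dnBest : P.dn B B' → CLe P [] [] (some B) (some B') .hole (.dn B B' .hole) B B
-- retract axioms for the casts into the dynamic types
| retractF : P.up A .dyn → P.dn (.F A) (.F .dyn) →
    CLe P [A] [A] none none
      (.dn (.F A) (.F .dyn) (.ret (.up A .dyn (.var 0)))) (.ret (.var 0)) (.F A) (.F A)
| retractU : P.up (.U B) (.U .dync) → P.dn B .dync →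
    CLe P [.U B] [.U B] none none
      (.dn B .dync (.force (.up (.U B) (.U .dync) (.var 0)))) (.force (.var 0)) B B
-- βη laws (computation versions)
| sumCBetaL : StoupOK P Δ → VTyping P Γ V A₁ → CTyping P (A₁::Γ) Δ M₁ B → CTyping P (A₂::Γ) Δ M₂ B →
    CLe P Γ Γ Δ Δ (.caseC (.inl V) M₁ M₂) (sub0C V M₁) B B
| sumCBetaL' : StoupOK P Δ → VTyping P Γ V A₁ → CTyping P (A₁::Γ) Δ M₁ B → CTyping P (A₂::Γ) Δ M₂ B →
    CLe P Γ Γ Δ Δ (sub0C V M₁) (.caseC (.inl V) M₁ M₂) B B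
| sumCBetaR : StoupOK P Δ → VTyping P Γ V A₂ → CTyping P (A₁::Γ) Δ M₁ B → CTyping P (A₂::Γ) Δ M₂ B →
    CLe P Γ Γ Δ Δ (.caseC (.inr V) M₁ M₂) (sub0C V M₂) B B
| sumCBetaR' : StoupOK P Δ → VTyping P Γ V A₂ → CTyping P (A₁::Γ) Δ M₁ B → CTyping P (A₂::Γ) Δ M₂ B →
    CLe P Γ Γ Δ Δ (sub0C V M₂) (.caseC (.inr V) M₁ M₂) B B
| sumCEta : StoupOK P Δ → CTyping P (.sum A₁ A₂ :: Γ) Δ M B →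
    CLe P (.sum A₁ A₂ :: Γ) (.sum A₁ A₂ :: Γ) Δ Δ M
      (.caseC (.var 0) (subC etaSumL M) (subC etaSumR M)) B B
| sumCEta' : StoupOK P Δ → CTyping P (.sum A₁ A₂ :: Γ) Δ M B →
    CLe P (.sum A₁ A₂ :: Γ) (.sum A₁ A₂ :: Γ) Δ Δ
      (.caseC (.var 0) (subC etaSumL M) (subC etaSumR M)) M B B
| zeroCEta : StoupOK P Δ → CTyping P (.zero :: Γ) Δ M B →
    CLe P (.zero :: Γ) (.zero :: Γ) Δ Δ M (.abortC (.var 0)) B B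
| zeroCEta' : StoupOK P Δ → CTyping P (.zero :: Γ) Δ M B →
    CLe P (.zero :: Γ) (.zero :: Γ) Δ Δ (.abortC (.var 0)) M B B
| prodCBeta : StoupOK P Δ → VTyping P Γ V₁ A₁ → VTyping P Γ V₂ A₂ → CTyping P (A₂::A₁::Γ) Δ M B →
    CLe P Γ Γ Δ Δ (.splitPC (.pair V₁ V₂) M) (sub2C V₁ V₂ M) B B
| prodCBeta' : StoupOK P Δ → VTyping P Γ V₁ A₁ → VTyping P Γ V₂ A₂ → CTyping P (A₂::A₁::Γ) Δ M B →
    CLe P Γ Γ Δ Δ (sub2C V₁ V₂ M) (.splitPC (.pair V₁ V₂) M) B B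
| prodCEta : StoupOK P Δ → CTyping P (.prod A₁ A₂ :: Γ) Δ M B →
    CLe P (.prod A₁ A₂ :: Γ) (.prod A₁ A₂ :: Γ) Δ Δ M (.splitPC (.var 0) (subC etaProd M)) B B
| prodCEta' : StoupOK P Δ → CTyping P (.prod A₁ A₂ :: Γ) Δ M B →
    CLe P (.prod A₁ A₂ :: Γ) (.prod A₁ A₂ :: Γ) Δ Δ (.splitPC (.var 0) (subC etaProd M)) M B B
| oneCBeta : StoupOK P Δ → CTyping P Γ Δ M B → CLe P Γ Γ Δ Δ (.splitUC .unit M) M B B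
| oneCBeta' : StoupOK P Δ → CTyping P Γ Δ M B → CLe P Γ Γ Δ Δ M (.splitUC .unit M) B B
| oneCEta : StoupOK P Δ → CTyping P (.one :: Γ) Δ M B →
    CLe P (.one :: Γ) (.one :: Γ) Δ Δ M (.splitUC (.var 0) (subC etaOne M)) B B
| oneCEta' : StoupOK P Δ → CTyping P (.one :: Γ) Δ M B →
    CLe P (.one :: Γ) (.one :: Γ) Δ Δ (.splitUC (.var 0) (subC etaOne M)) M B B
| muCBeta : StoupOK P Δ → P.recty → VTyping P Γ V (muUnfold A) → CTyping P ((muUnfold A)::Γ) Δ M B →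
    CLe P Γ Γ Δ Δ (.unrollPC (.rollV (.mu A) V) M) (sub0C V M) B B
| muCBeta' : StoupOK P Δ → P.recty → VTyping P Γ V (muUnfold A) → CTyping P ((muUnfold A)::Γ) Δ M B →
    CLe P Γ Γ Δ Δ (sub0C V M) (.unrollPC (.rollV (.mu A) V) M) B B
| muCEta : StoupOK P Δ → P.recty → CTyping P (.mu A :: Γ) Δ M B →
    CLe P (.mu A :: Γ) (.mu A :: Γ) Δ Δ M (.unrollPC (.var 0) (subC (etaMu A) M)) B B
| muCEta' : StoupOK P Δ → P.recty → CTyping P (.mu A :: Γ) Δ M B →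
    CLe P (.mu A :: Γ) (.mu A :: Γ) Δ Δ (.unrollPC (.var 0) (subC (etaMu A) M)) M B B
| uBeta : CTyping P Γ none M B → CLe P Γ Γ none none (.force (.thunk M)) M B B
| uBeta' : CTyping P Γ none M B → CLe P Γ Γ none none M (.force (.thunk M)) B B
| fBeta : VTyping P Γ V A → CTyping P (A::Γ) none N B →
    CLe P Γ Γ none none (.bind (.ret V) N) (sub0C V N) B B
| fBeta' : VTyping P Γ V A → CTyping P (A::Γ) none N B →
    CLe P Γ Γ none none (sub0C V N) (.bind (.ret V) N) B B
| fEta : CTyping P Γ (some (.F A)) M B →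
    CLe P Γ Γ (some (.F A)) (some (.F A)) M
      (.bind .hole (plug (renC Nat.succ M) (.ret (.var 0)))) B B
| fEta' : CTyping P Γ (some (.F A)) M B →
    CLe P Γ Γ (some (.F A)) (some (.F A))
      (.bind .hole (plug (renC Nat.succ M) (.ret (.var 0)))) M B B
| arrBeta : StoupOK P Δ → CTyping P (A::Γ) Δ M B → VTyping P Γ V A →
    CLe P Γ Γ Δ Δ (.app (.lam M) V) (sub0C V M) B B
| arrBeta' : StoupOK P Δ → CTyping P (A::Γ) Δ M B → VTyping P Γ V A →
    CLe P Γ Γ Δ Δ (sub0C V M) (.app (.lam M) V) B B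
| arrEta : StoupOK P Δ → CTyping P Γ Δ M (.arr A B) →
    CLe P Γ Γ Δ Δ M (.lam (.app (renC Nat.succ M) (.var 0))) (.arr A B) (.arr A B)
| arrEta' : StoupOK P Δ → CTyping P Γ Δ M (.arr A B) →
    CLe P Γ Γ Δ Δ (.lam (.app (renC Nat.succ M) (.var 0))) M (.arr A B) (.arr A B)
| wthBeta1 : StoupOK P Δ → CTyping P Γ Δ M₁ B₁ → CTyping P Γ Δ M₂ B₂ →
    CLe P Γ Γ Δ Δ (.fst (.pairC M₁ M₂)) M₁ B₁ B₁
| wthBeta1' : StoupOK P Δ → CTyping P Γ Δ M₁ B₁ → CTyping P Γ Δ M₂ B₂ →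
    CLe P Γ Γ Δ Δ M₁ (.fst (.pairC M₁ M₂)) B₁ B₁
| wthBeta2 : StoupOK P Δ → CTyping P Γ Δ M₁ B₁ → CTyping P Γ Δ M₂ B₂ →
    CLe P Γ Γ Δ Δ (.snd (.pairC M₁ M₂)) M₂ B₂ B₂
| wthBeta2' : StoupOK P Δ → CTyping P Γ Δ M₁ B₁ → CTyping P Γ Δ M₂ B₂ →
    CLe P Γ Γ Δ Δ M₂ (.snd (.pairC M₁ M₂)) B₂ B₂
| wthEta : StoupOK P Δ → CTyping P Γ Δ M (.wth B₁ B₂) →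
    CLe P Γ Γ Δ Δ M (.pairC (.fst M) (.snd M)) (.wth B₁ B₂) (.wth B₁ B₂)
| wthEta' : StoupOK P Δ → CTyping P Γ Δ M (.wth B₁ B₂) →
    CLe P Γ Γ Δ Δ (.pairC (.fst M) (.snd M)) M (.wth B₁ B₂) (.wth B₁ B₂)
| topEta : StoupOK P Δ → CTyping P Γ Δ M .top → CLe P Γ Γ Δ Δ M .unitC .top .top
| topEta' : StoupOK P Δ → CTyping P Γ Δ M .top → CLe P Γ Γ Δ Δ .unitC M .top .top
| nuBeta : P.recty → CTyping P Γ Δ M (nuUnfold B) →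
    CLe P Γ Γ Δ Δ (.unrollC (.rollC (.nu B) M)) M (nuUnfold B) (nuUnfold B)
| nuBeta' : P.recty → CTyping P Γ Δ M (nuUnfold B) →
    CLe P Γ Γ Δ Δ M (.unrollC (.rollC (.nu B) M)) (nuUnfold B) (nuUnfold B)
| nuEta : P.recty → CTyping P Γ Δ M (.nu B) →
    CLe P Γ Γ Δ Δ M (.rollC (.nu B) (.unrollC M)) (.nu B) (.nu B)
| nuEta' : P.recty → CTyping P Γ Δ M (.nu B) →
    CLe P Γ Γ Δ Δ (.rollC (.nu B) (.unrollC M)) M (.nu B) (.nu B)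
end

/-! ## Equi-dynamism and the particular theories. -/

/-- Homogeneous equi-dynamism of values, `Γ ⊢ V ⋈ V' : A`. -/
def VEquiv (P : Policy) (Γ : Ctx) (V V' : Val) (A : VTy) : Prop :=
  VLe P Γ Γ V V' A A ∧ VLe P Γ Γ V' V A A

/-- Homogeneous equi-dynamism of computations/stacks, `Γ | Δ ⊢ M ⋈ M' : B`. -/
def CEquiv (P : Policy) (Γ : Ctx) (Δ : Option CTy) (M M' : Comp) (B : CTy) : Prop :=
  CLe P Γ Γ Δ Δ M M' B B ∧ CLe P Γ Γ Δ Δ M' M B B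

/-- The theory GTT: primitive casts for every type dynamism, complex values and
stacks, no (co)recursive types. -/
def gttP : Policy :=
  { up := VDyn, dn := CDyn, recty := False, cx := True }

/-- Ground value types `G ::= 1 | ? × ? | 0 | ? + ? | U ¿`. -/
def isGroundV (A : VTy) : Prop :=
  A = .one ∨ A = .prod .dyn .dyn ∨ A = .zero ∨ A = .sum .dyn .dyn ∨ A = .U .dync

/-- Ground computation types `Ḡ ::= ? → ¿ | ⊤ | ¿ & ¿ | F ?`. -/
def isGroundC (B : CTy) : Prop :=
  B = .arr .dyn .dync ∨ B = .top ∨ B = .wth .dync .dync ∨ B = .F .dyn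

/-- The theory GTT_G: its only primitive casts are the upcasts `⟨?↢G⟩`,
the downcasts `⟨FG↞F?⟩`, the downcasts `⟨Ḡ↞¿⟩`, and the upcasts `⟨U¿↢UḠ⟩`
for ground types `G`, `Ḡ`. -/
def gttGP : Policy :=
  { up := fun A A' => (isGroundV A ∧ A' = .dyn) ∨
            (∃ B, isGroundC B ∧ A = .U B ∧ A' = .U .dync),
    dn := fun B B' => (isGroundC B ∧ B' = .dync) ∨
            (∃ A, isGroundV A ∧ B = .F A ∧ B' = .F .dyn),
    recty := False, cx := True }

/-- The theory CBPV*: call-by-push-value with complex values and complex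
stacks, (co)recursive types and error, and no casts. -/
def cbpvStarP : Policy :=
  { up := fun _ _ => False, dn := fun _ _ => False, recty := True, cx := True }

/-- Operational CBPV: as CBPV* but without complex values and complex stacks. -/
def cbpvP : Policy :=
  { up := fun _ _ => False, dn := fun _ _ => False, recty := True, cx := False }

/-! ## Universal properties of casts. -/

/-- `V` (with one free variable `x : A`) satisfies the universal property of an
upcast for `A ⊑ A'`:  `x : A ⊢ x ⊑ V : A ⊑ A'` and
`x ⊑ x' : A ⊑ A' ⊢ V ⊑ x' : A'`. -/
def UpcastUP (P : Policy) (A A' : VTy) (V : Val) : Prop :=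
  VTyping P [A] V A' ∧
  VLe P [A] [A] (.var 0) V A A' ∧
  VLe P [A] [A'] V (.var 0) A' A'

/-- `S` (a stack with hole `• : B'`) satisfies the universal property of a
downcast for `B ⊑ B'`:  `• : B' ⊢ S ⊑ • : B ⊑ B'` and
`• ⊑ •' : B ⊑ B' ⊢ • ⊑ S : B`. -/
def DowncastUP (P : Policy) (B B' : CTy) (S : Comp) : Prop :=
  CTyping P [] (some B') S B ∧
  CLe P [] [] (some B') (some B') S .hole B B' ∧
  CLe P [] [] (some B) (some B') .hole S B B

/-- A stack upcast for `B ⊑ B'`: a stack `• : B ⊢ S : B'` with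
`• : B ⊢ • ⊑ S : B ⊑ B'` and `• ⊑ •' : B ⊑ B' ⊢ S ⊑ •' : B'`. -/
def StackUpcast (P : Policy) (B B' : CTy) (S : Comp) : Prop :=
  CTyping P [] (some B) S B' ∧
  CLe P [] [] (some B) (some B) .hole S B B' ∧
  CLe P [] [] (some B) (some B') S .hole B' B'

/-- A value downcast for `A ⊑ A'`: a complex value `x : A' ⊢ V : A` with
`x : A' ⊢ V ⊑ x : A ⊑ A'` and `x ⊑ x' : A ⊑ A' ⊢ x ⊑ V[x'/x] : A`. -/
def ValueDowncast (P : Policy) (A A' : VTy) (V : Val) : Prop :=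
  VTyping P [A'] V A ∧
  VLe P [A'] [A'] V (.var 0) A A' ∧
  VLe P [A] [A'] (.var 0) V A A

/-! ## Dynamic-type-free types (the image of CBPV* inside GTT). -/

mutual
def VTy.noDyn : VTy → Prop
| .dyn => False
| .zero => True
| .one => True
| .sum A A' => A.noDyn ∧ A'.noDyn
| .prod A A' => A.noDyn ∧ A'.noDyn
| .U B => B.noDyn
| .tvarV _ => True
| .mu A => A.noDyn
def CTy.noDyn : CTy → Prop
| .dync => False
| .top => True
| .wth B B' => B.noDyn ∧ B'.noDyn
| .arr A B => A.noDyn ∧ B.noDyn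
| .F A => A.noDyn
| .tvarC _ => True
| .nu B => B.noDyn
end

def stoupNoDyn : Option CTy → Prop
| none => True
| some B => B.noDyn

/-! ## Embedding-projection pairs in CBPV*. -/

/-- A value ep pair from `A` to `A'` in CBPV*: an embedding value
`x:A ⊢ Ve : A'` and a projection stack `•:FA' ⊢ Sp : FA` satisfying
retraction `x:A ⊢ ret x ⋈ Sp[ret Ve] : FA` and projection
`•:FA' ⊢ bind(Sp, x. ret Ve) ⊑ • : FA'`. -/
def ValEP (A A' : VTy) (Ve : Val) (Sp : Comp) : Prop :=
  VTyping cbpvStarP [A] Ve A' ∧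
  CTyping cbpvStarP [] (some (.F A')) Sp (.F A) ∧
  CEquiv cbpvStarP [A] none (.ret (.var 0)) (plug Sp (.ret Ve)) (.F A) ∧
  CLe cbpvStarP [] [] (some (.F A')) (some (.F A'))
    (.bind Sp (.ret Ve)) .hole (.F A') (.F A')

/-- A computation ep pair from `B` to `B'` in CBPV*: an embedding value
`z:UB ⊢ Ve : UB'` and a projection stack `•:B' ⊢ Sp : B` satisfying
retraction `z:UB ⊢ force z ⋈ Sp[force Ve] : B` and projection
`w:UB' ⊢ Ve[thunk(Sp[force w])/z] ⊑ w : UB'`. -/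
def CompEP (B B' : CTy) (Ve : Val) (Sp : Comp) : Prop :=
  VTyping cbpvStarP [.U B] Ve (.U B') ∧
  CTyping cbpvStarP [] (some B') Sp B ∧
  CEquiv cbpvStarP [.U B] none (.force (.var 0)) (plug Sp (.force Ve)) B ∧
  VLe cbpvStarP [.U B'] [.U B']
    (sub0V (.thunk (plug Sp (.force (.var 0)))) Ve) (.var 0) (.U B') (.U B')

/-!
The retractions compose by substituting the first embedding `V₁` into the retraction of the
second pair and plugging the result into `S₁`. For value pairs the projection law follows from
β for `F`, associativity of `bind` (an instance of η for `F` on stacks) and the two projection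
laws. For computation pairs, β for `U` turns `force (thunk (S₂[force w]))` back into
`S₂[force w]`, so the first projection law applies at `w' = thunk (S₂[force w])` and the second
one finishes. Besides the βη laws the argument only needs that the inequational theory of CBPV*
is closed under weakening and that substitution commutes with plugging into closed stacks.
-/

/-! ### Renaming and substitution -/

theorem liftN_comp (f g : ℕ → ℕ) : liftN (f ∘ g) = liftN f ∘ liftN g := by
  funext n; cases n <;> rfl

theorem liftN_id : liftN id = id := by
  funext n; cases n <;> rfl

mutual
theorem renV_renV (f g : ℕ → ℕ) : ∀ V, renV f (renV g V) = renV (f ∘ g) V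
  | .var _ | .unit => rfl
  | .up _ _ V | .inl V | .inr V | .abortV V | .rollV _ V => by simp [renV, renV_renV f g V]
  | .pair V W | .splitUV V W => by simp [renV, renV_renV f g V, renV_renV f g W]
  | .caseV V W₁ W₂ => by
      simp [renV, renV_renV f g V, renV_renV _ _ W₁, renV_renV _ _ W₂, liftN_comp]
  | .splitPV V W | .unrollPV V W => by simp [renV, renV_renV f g V, renV_renV _ _ W, liftN_comp]
  | .thunk M => by simp [renV, renC_renC f g M]
theorem renC_renC (f g : ℕ → ℕ) : ∀ M, renC f (renC g M) = renC (f ∘ g) M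
  | .hole | .err | .unitC => rfl
  | .dn _ _ M | .fst M | .snd M | .rollC _ M | .unrollC M => by simp [renC, renC_renC f g M]
  | .force V | .ret V | .abortC V => by simp [renC, renV_renV f g V]
  | .lam M => by simp [renC, renC_renC _ _ M, liftN_comp]
  | .app M V => by simp [renC, renC_renC f g M, renV_renV f g V]
  | .pairC M N => by simp [renC, renC_renC f g M, renC_renC f g N]
  | .bind M N => by simp [renC, renC_renC f g M, renC_renC _ _ N, liftN_comp]
  | .caseC V M₁ M₂ => by
      simp [renC, renV_renV f g V, renC_renC _ _ M₁, renC_renC _ _ M₂, liftN_comp]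
  | .splitUC V M => by simp [renC, renV_renV f g V, renC_renC f g M]
  | .splitPC V M | .unrollPC V M => by
      simp [renC, renV_renV f g V, renC_renC _ _ M, liftN_comp]
end

mutual
theorem renV_id : ∀ V, renV id V = V
  | .var _ | .unit => rfl
  | .up _ _ V | .inl V | .inr V | .abortV V | .rollV _ V => by simp [renV, renV_id V]
  | .pair V W | .splitUV V W => by simp [renV, renV_id V, renV_id W]
  | .caseV V W₁ W₂ => by simp [renV, renV_id V, liftN_id, renV_id W₁, renV_id W₂]
  | .splitPV V W | .unrollPV V W => by simp [renV, renV_id V, liftN_id, renV_id W]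
  | .thunk M => by simp [renV, renC_id M]
theorem renC_id : ∀ M, renC id M = M
  | .hole | .err | .unitC => rfl
  | .dn _ _ M | .fst M | .snd M | .rollC _ M | .unrollC M => by simp [renC, renC_id M]
  | .force V | .ret V | .abortC V => by simp [renC, renV_id V]
  | .lam M => by simp [renC, liftN_id, renC_id M]
  | .app M V => by simp [renC, renC_id M, renV_id V]
  | .pairC M N => by simp [renC, renC_id M, renC_id N]
  | .bind M N => by simp [renC, renC_id M, liftN_id, renC_id N]
  | .caseC V M₁ M₂ => by simp [renC, renV_id V, liftN_id, renC_id M₁, renC_id M₂]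
  | .splitUC V M => by simp [renC, renV_id V, renC_id M]
  | .splitPC V M | .unrollPC V M => by simp [renC, renV_id V, liftN_id, renC_id M]
end

theorem liftSub_comp_liftN (σ : ℕ → Val) (f : ℕ → ℕ) :
    liftSub (σ ∘ f) = liftSub σ ∘ liftN f := by
  funext n; cases n <;> rfl

mutual
theorem subV_renV (σ : ℕ → Val) (f : ℕ → ℕ) : ∀ V, subV σ (renV f V) = subV (σ ∘ f) V
  | .var _ | .unit => rfl
  | .up _ _ V | .inl V | .inr V | .abortV V | .rollV _ V => by simp [renV, subV, subV_renV σ f V]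
  | .pair V W | .splitUV V W => by simp [renV, subV, subV_renV σ f V, subV_renV σ f W]
  | .caseV V W₁ W₂ => by
      simp [renV, subV, subV_renV σ f V, subV_renV _ _ W₁, subV_renV _ _ W₂, liftSub_comp_liftN]
  | .splitPV V W | .unrollPV V W => by
      simp [renV, subV, subV_renV σ f V, subV_renV _ _ W, liftSub_comp_liftN]
  | .thunk M => by simp [renV, subV, subC_renC σ f M]
theorem subC_renC (σ : ℕ → Val) (f : ℕ → ℕ) : ∀ M, subC σ (renC f M) = subC (σ ∘ f) M
  | .hole | .err | .unitC => rfl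
  | .dn _ _ M | .fst M | .snd M | .rollC _ M | .unrollC M => by
      simp [renC, subC, subC_renC σ f M]
  | .force V | .ret V | .abortC V => by simp [renC, subC, subV_renV σ f V]
  | .lam M => by simp [renC, subC, subC_renC _ _ M, liftSub_comp_liftN]
  | .app M V => by simp [renC, subC, subC_renC σ f M, subV_renV σ f V]
  | .pairC M N => by simp [renC, subC, subC_renC σ f M, subC_renC σ f N]
  | .bind M N => by simp [renC, subC, subC_renC σ f M, subC_renC _ _ N, liftSub_comp_liftN]
  | .caseC V M₁ M₂ => by
      simp [renC, subC, subV_renV σ f V, subC_renC _ _ M₁, subC_renC _ _ M₂, liftSub_comp_liftN]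
  | .splitUC V M => by simp [renC, subC, subV_renV σ f V, subC_renC σ f M]
  | .splitPC V M | .unrollPC V M => by
      simp [renC, subC, subV_renV σ f V, subC_renC _ _ M, liftSub_comp_liftN]
end

theorem liftSub_renV (f : ℕ → ℕ) (σ : ℕ → Val) :
    liftSub (renV f ∘ σ) = renV (liftN f) ∘ liftSub σ := by
  funext n
  cases n with
  | zero => rfl
  | succ n => simp only [Function.comp, liftSub, renV_renV]; rfl

mutual
theorem renV_subV (f : ℕ → ℕ) (σ : ℕ → Val) : ∀ V, renV f (subV σ V) = subV (renV f ∘ σ) V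
  | .var _ | .unit => rfl
  | .up _ _ V | .inl V | .inr V | .abortV V | .rollV _ V => by simp [renV, subV, renV_subV f σ V]
  | .pair V W | .splitUV V W => by simp [renV, subV, renV_subV f σ V, renV_subV f σ W]
  | .caseV V W₁ W₂ => by
      simp [renV, subV, renV_subV f σ V, renV_subV _ _ W₁, renV_subV _ _ W₂, liftSub_renV]
  | .splitPV V W | .unrollPV V W => by
      simp [renV, subV, renV_subV f σ V, renV_subV _ _ W, liftSub_renV]
  | .thunk M => by simp [renV, subV, renC_subC f σ M]
theorem renC_subC (f : ℕ → ℕ) (σ : ℕ → Val) : ∀ M, renC f (subC σ M) = subC (renV f ∘ σ) M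
  | .hole | .err | .unitC => rfl
  | .dn _ _ M | .fst M | .snd M | .rollC _ M | .unrollC M => by
      simp [renC, subC, renC_subC f σ M]
  | .force V | .ret V | .abortC V => by simp [renC, subC, renV_subV f σ V]
  | .lam M => by simp [renC, subC, renC_subC _ _ M, liftSub_renV]
  | .app M V => by simp [renC, subC, renC_subC f σ M, renV_subV f σ V]
  | .pairC M N => by simp [renC, subC, renC_subC f σ M, renC_subC f σ N]
  | .bind M N => by simp [renC, subC, renC_subC f σ M, renC_subC _ _ N, liftSub_renV]
  | .caseC V M₁ M₂ => by
      simp [renC, subC, renV_subV f σ V, renC_subC _ _ M₁, renC_subC _ _ M₂, liftSub_renV]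
  | .splitUC V M => by simp [renC, subC, renV_subV f σ V, renC_subC f σ M]
  | .splitPC V M | .unrollPC V M => by
      simp [renC, subC, renV_subV f σ V, renC_subC _ _ M, liftSub_renV]
end

theorem liftSub_subV (σ τ : ℕ → Val) :
    liftSub (subV σ ∘ τ) = subV (liftSub σ) ∘ liftSub τ := by
  funext n
  cases n with
  | zero => rfl
  | succ n => simp only [Function.comp, liftSub, renV_subV, subV_renV]; rfl

mutual
theorem subV_subV (σ τ : ℕ → Val) : ∀ V, subV σ (subV τ V) = subV (subV σ ∘ τ) V
  | .var _ | .unit => rfl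
  | .up _ _ V | .inl V | .inr V | .abortV V | .rollV _ V => by simp [subV, subV_subV σ τ V]
  | .pair V W | .splitUV V W => by simp [subV, subV_subV σ τ V, subV_subV σ τ W]
  | .caseV V W₁ W₂ => by
      simp [subV, subV_subV σ τ V, subV_subV _ _ W₁, subV_subV _ _ W₂, liftSub_subV]
  | .splitPV V W | .unrollPV V W => by simp [subV, subV_subV σ τ V, subV_subV _ _ W, liftSub_subV]
  | .thunk M => by simp [subV, subC_subC σ τ M]
theorem subC_subC (σ τ : ℕ → Val) : ∀ M, subC σ (subC τ M) = subC (subV σ ∘ τ) M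
  | .hole | .err | .unitC => rfl
  | .dn _ _ M | .fst M | .snd M | .rollC _ M | .unrollC M => by simp [subC, subC_subC σ τ M]
  | .force V | .ret V | .abortC V => by simp [subC, subV_subV σ τ V]
  | .lam M => by simp [subC, subC_subC _ _ M, liftSub_subV]
  | .app M V => by simp [subC, subC_subC σ τ M, subV_subV σ τ V]
  | .pairC M N => by simp [subC, subC_subC σ τ M, subC_subC σ τ N]
  | .bind M N => by simp [subC, subC_subC σ τ M, subC_subC _ _ N, liftSub_subV]
  | .caseC V M₁ M₂ => by
      simp [subC, subV_subV σ τ V, subC_subC _ _ M₁, subC_subC _ _ M₂, liftSub_subV]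
  | .splitUC V M => by simp [subC, subV_subV σ τ V, subC_subC σ τ M]
  | .splitPC V M | .unrollPC V M => by simp [subC, subV_subV σ τ V, subC_subC _ _ M, liftSub_subV]
end

theorem liftSub_var : liftSub Val.var = Val.var := by
  funext n; cases n <;> rfl

mutual
theorem subV_var : ∀ V, subV Val.var V = V
  | .var _ | .unit => rfl
  | .up _ _ V | .inl V | .inr V | .abortV V | .rollV _ V => by simp [subV, subV_var V]
  | .pair V W | .splitUV V W => by simp [subV, subV_var V, subV_var W]
  | .caseV V W₁ W₂ => by simp [subV, subV_var V, liftSub_var, subV_var W₁, subV_var W₂]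
  | .splitPV V W | .unrollPV V W => by simp [subV, subV_var V, liftSub_var, subV_var W]
  | .thunk M => by simp [subV, subC_var M]
theorem subC_var : ∀ M, subC Val.var M = M
  | .hole | .err | .unitC => rfl
  | .dn _ _ M | .fst M | .snd M | .rollC _ M | .unrollC M => by simp [subC, subC_var M]
  | .force V | .ret V | .abortC V => by simp [subC, subV_var V]
  | .lam M => by simp [subC, liftSub_var, subC_var M]
  | .app M V => by simp [subC, subC_var M, subV_var V]
  | .pairC M N => by simp [subC, subC_var M, subC_var N]
  | .bind M N => by simp [subC, subC_var M, liftSub_var, subC_var N]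
  | .caseC V M₁ M₂ => by simp [subC, subV_var V, liftSub_var, subC_var M₁, subC_var M₂]
  | .splitUC V M => by simp [subC, subV_var V, subC_var M]
  | .splitPC V M | .unrollPC V M => by simp [subC, subV_var V, liftSub_var, subC_var M]
end

theorem liftSub_var_comp (f : ℕ → ℕ) : liftSub (Val.var ∘ f) = Val.var ∘ liftN f := by
  funext n; cases n <;> rfl

mutual
theorem renV_eq_subV (f : ℕ → ℕ) : ∀ V, renV f V = subV (Val.var ∘ f) V
  | .var _ | .unit => rfl
  | .up _ _ V | .inl V | .inr V | .abortV V | .rollV _ V => by simp [renV, subV, renV_eq_subV f V]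
  | .pair V W | .splitUV V W => by simp [renV, subV, renV_eq_subV f V, renV_eq_subV f W]
  | .caseV V W₁ W₂ => by
      simp [renV, subV, renV_eq_subV f V, renV_eq_subV _ W₁, renV_eq_subV _ W₂, liftSub_var_comp]
  | .splitPV V W | .unrollPV V W => by
      simp [renV, subV, renV_eq_subV f V, renV_eq_subV _ W, liftSub_var_comp]
  | .thunk M => by simp [renV, subV, renC_eq_subC f M]
theorem renC_eq_subC (f : ℕ → ℕ) : ∀ M, renC f M = subC (Val.var ∘ f) M
  | .hole | .err | .unitC => rfl
  | .dn _ _ M | .fst M | .snd M | .rollC _ M | .unrollC M => by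
      simp [renC, subC, renC_eq_subC f M]
  | .force V | .ret V | .abortC V => by simp [renC, subC, renV_eq_subV f V]
  | .lam M => by simp [renC, subC, renC_eq_subC _ M, liftSub_var_comp]
  | .app M V => by simp [renC, subC, renC_eq_subC f M, renV_eq_subV f V]
  | .pairC M N => by simp [renC, subC, renC_eq_subC f M, renC_eq_subC f N]
  | .bind M N => by simp [renC, subC, renC_eq_subC f M, renC_eq_subC _ N, liftSub_var_comp]
  | .caseC V M₁ M₂ => by
      simp [renC, subC, renV_eq_subV f V, renC_eq_subC _ M₁, renC_eq_subC _ M₂, liftSub_var_comp]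
  | .splitUC V M => by simp [renC, subC, renV_eq_subV f V, renC_eq_subC f M]
  | .splitPC V M | .unrollPC V M => by
      simp [renC, subC, renV_eq_subV f V, renC_eq_subC _ M, liftSub_var_comp]
end

/-! ### Typing under renaming and substitution -/

def IsRenaming (f : ℕ → ℕ) (Γ Γ' : Ctx) : Prop :=
  ∀ n A, Γ[n]? = some A → Γ'[f n]? = some A

def IsSubst (P : Policy) (σ : ℕ → Val) (Γ Γ' : Ctx) : Prop :=
  ∀ n A, Γ[n]? = some A → VTyping P Γ' (σ n) A

theorem IsRenaming.liftN {f : ℕ → ℕ} {Γ Γ' : Ctx} (hf : IsRenaming f Γ Γ') (A : VTy) :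
    IsRenaming (liftN f) (A :: Γ) (A :: Γ') := by
  rintro (_ | n) B h
  exacts [h, hf n B h]

theorem isRenaming_append (Γ Ξ : Ctx) : IsRenaming id Γ (Γ ++ Ξ) := by
  intro n B h
  rwa [id, List.getElem?_append_left (List.getElem?_eq_some_iff.mp h).1]

theorem isRenaming_append_left (Γ Ξ : Ctx) : IsRenaming (· + Ξ.length) Γ (Ξ ++ Γ) := by
  intro n B h
  rwa [List.getElem?_append_right (Nat.le_add_left _ _), Nat.add_sub_cancel]

mutual
theorem VTyping.ren {P Γ V A Γ' f} (h : VTyping P Γ V A) (hf : IsRenaming f Γ Γ') :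
    VTyping P Γ' (renV f V) A :=
  match h with
  | .var hg => .var (hf _ _ hg)
  | .up hu h => .up hu (h.ren hf)
  | .unit => .unit
  | .inl h => .inl (h.ren hf)
  | .inr h => .inr (h.ren hf)
  | .pair h₁ h₂ => .pair (h₁.ren hf) (h₂.ren hf)
  | .abortV hcx h => .abortV hcx (h.ren hf)
  | .caseV hcx h h₁ h₂ => .caseV hcx (h.ren hf) (h₁.ren (hf.liftN _)) (h₂.ren (hf.liftN _))
  | .splitPV hcx h h₁ => .splitPV hcx (h.ren hf) (h₁.ren ((hf.liftN _).liftN _))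
  | .splitUV hcx h h₁ => .splitUV hcx (h.ren hf) (h₁.ren hf)
  | .rollV hr h => .rollV hr (h.ren hf)
  | .unrollPV hcx hr h h₁ => .unrollPV hcx hr (h.ren hf) (h₁.ren (hf.liftN _))
  | .thunk h => .thunk (h.ren hf)
theorem CTyping.ren {P Γ Δ M B Γ' f} (h : CTyping P Γ Δ M B) (hf : IsRenaming f Γ Γ') :
    CTyping P Γ' Δ (renC f M) B :=
  match h with
  | .hole => .hole
  | .err => .err
  | .dn hd h => .dn hd (h.ren hf)
  | .force h => .force (h.ren hf)
  | .ret h => .ret (h.ren hf)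
  | .bind h h₁ => .bind (h.ren hf) (h₁.ren (hf.liftN _))
  | .lam hs h => .lam hs (h.ren (hf.liftN _))
  | .app h hv => .app (h.ren hf) (hv.ren hf)
  | .unitC hs => .unitC hs
  | .pairC hs h₁ h₂ => .pairC hs (h₁.ren hf) (h₂.ren hf)
  | .fst h => .fst (h.ren hf)
  | .snd h => .snd (h.ren hf)
  | .abortC hs hv => .abortC hs (hv.ren hf)
  | .caseC hs hv h₁ h₂ => .caseC hs (hv.ren hf) (h₁.ren (hf.liftN _)) (h₂.ren (hf.liftN _))
  | .splitPC hs hv h₁ => .splitPC hs (hv.ren hf) (h₁.ren ((hf.liftN _).liftN _))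
  | .splitUC hs hv h₁ => .splitUC hs (hv.ren hf) (h₁.ren hf)
  | .unrollPC hs hr hv h₁ => .unrollPC hs hr (hv.ren hf) (h₁.ren (hf.liftN _))
  | .rollC hr h => .rollC hr (h.ren hf)
  | .unrollC hr h => .unrollC hr (h.ren hf)
end

theorem VTyping.weaken {P Γ V A} (h : VTyping P Γ V A) (Ξ : Ctx) : VTyping P (Γ ++ Ξ) V A :=
  renV_id V ▸ h.ren (isRenaming_append Γ Ξ)

theorem CTyping.weaken {P Γ Δ M B} (h : CTyping P Γ Δ M B) (Ξ : Ctx) :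
    CTyping P (Γ ++ Ξ) Δ M B :=
  renC_id M ▸ h.ren (isRenaming_append Γ Ξ)

theorem IsSubst.liftSub {P σ Γ Γ'} (hσ : IsSubst P σ Γ Γ') (A : VTy) :
    IsSubst P (liftSub σ) (A :: Γ) (A :: Γ') := by
  rintro (_ | n) B h
  exacts [.var h, (hσ n B h).ren fun _ _ hm => hm]

theorem isSubst_sub0 {P Γ V A} (h : VTyping P Γ V A) : IsSubst P (sub0 V) [A] Γ := by
  rintro (_ | n) B hn
  exacts [Option.some_injective _ hn ▸ h, by simp at hn]

mutual
theorem VTyping.sub {P Γ V A Γ' σ} (h : VTyping P Γ V A) (hσ : IsSubst P σ Γ Γ') :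
    VTyping P Γ' (subV σ V) A :=
  match h with
  | .var hg => hσ _ _ hg
  | .up hu h => .up hu (h.sub hσ)
  | .unit => .unit
  | .inl h => .inl (h.sub hσ)
  | .inr h => .inr (h.sub hσ)
  | .pair h₁ h₂ => .pair (h₁.sub hσ) (h₂.sub hσ)
  | .abortV hcx h => .abortV hcx (h.sub hσ)
  | .caseV hcx h h₁ h₂ =>
      .caseV hcx (h.sub hσ) (h₁.sub (hσ.liftSub _)) (h₂.sub (hσ.liftSub _))
  | .splitPV hcx h h₁ => .splitPV hcx (h.sub hσ) (h₁.sub ((hσ.liftSub _).liftSub _))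
  | .splitUV hcx h h₁ => .splitUV hcx (h.sub hσ) (h₁.sub hσ)
  | .rollV hr h => .rollV hr (h.sub hσ)
  | .unrollPV hcx hr h h₁ => .unrollPV hcx hr (h.sub hσ) (h₁.sub (hσ.liftSub _))
  | .thunk h => .thunk (h.sub hσ)
theorem CTyping.sub {P Γ Δ M B Γ' σ} (h : CTyping P Γ Δ M B) (hσ : IsSubst P σ Γ Γ') :
    CTyping P Γ' Δ (subC σ M) B :=
  match h with
  | .hole => .hole
  | .err => .err
  | .dn hd h => .dn hd (h.sub hσ)
  | .force h => .force (h.sub hσ)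
  | .ret h => .ret (h.sub hσ)
  | .bind h h₁ => .bind (h.sub hσ) (h₁.sub (hσ.liftSub _))
  | .lam hs h => .lam hs (h.sub (hσ.liftSub _))
  | .app h hv => .app (h.sub hσ) (hv.sub hσ)
  | .unitC hs => .unitC hs
  | .pairC hs h₁ h₂ => .pairC hs (h₁.sub hσ) (h₂.sub hσ)
  | .fst h => .fst (h.sub hσ)
  | .snd h => .snd (h.sub hσ)
  | .abortC hs hv => .abortC hs (hv.sub hσ)
  | .caseC hs hv h₁ h₂ =>
      .caseC hs (hv.sub hσ) (h₁.sub (hσ.liftSub _)) (h₂.sub (hσ.liftSub _))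
  | .splitPC hs hv h₁ => .splitPC hs (hv.sub hσ) (h₁.sub ((hσ.liftSub _).liftSub _))
  | .splitUC hs hv h₁ => .splitUC hs (hv.sub hσ) (h₁.sub hσ)
  | .unrollPC hs hr hv h₁ => .unrollPC hs hr (hv.sub hσ) (h₁.sub (hσ.liftSub _))
  | .rollC hr h => .rollC hr (h.sub hσ)
  | .unrollC hr h => .unrollC hr (h.sub hσ)
end

theorem liftSub_congr {σ τ : ℕ → Val} {k : ℕ} (h : ∀ n < k, σ n = τ n) :
    ∀ n < k + 1, liftSub σ n = liftSub τ n
  | 0, _ => rfl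
  | n + 1, hn => by simp only [liftSub, h n (by omega)]

mutual
theorem VTyping.subV_congr {P Γ V A} {σ τ : ℕ → Val} (h : VTyping P Γ V A)
    (hστ : ∀ n < Γ.length, σ n = τ n) : subV σ V = subV τ V := by
  match h with
  | .var hg => exact hστ _ (List.getElem?_eq_some_iff.mp hg).1
  | .unit => rfl
  | .up _ h | .inl h | .inr h | .abortV _ h | .rollV _ h => simp [subV, h.subV_congr hστ]
  | .pair h₁ h₂ | .splitUV _ h₁ h₂ => simp [subV, h₁.subV_congr hστ, h₂.subV_congr hστ]
  | .caseV _ h h₁ h₂ =>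
      simp [subV, h.subV_congr hστ, h₁.subV_congr (liftSub_congr hστ),
        h₂.subV_congr (liftSub_congr hστ)]
  | .splitPV _ h h₁ =>
      simp [subV, h.subV_congr hστ, h₁.subV_congr (liftSub_congr (liftSub_congr hστ))]
  | .unrollPV _ _ h h₁ => simp [subV, h.subV_congr hστ, h₁.subV_congr (liftSub_congr hστ)]
  | .thunk h => simp [subV, h.subC_congr hστ]
theorem CTyping.subC_congr {P Γ Δ M B} {σ τ : ℕ → Val} (h : CTyping P Γ Δ M B)
    (hστ : ∀ n < Γ.length, σ n = τ n) : subC σ M = subC τ M := by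
  match h with
  | .hole | .err | .unitC _ => rfl
  | .dn _ h | .fst h | .snd h | .rollC _ h | .unrollC _ h => simp [subC, h.subC_congr hστ]
  | .force h | .ret h | .abortC _ h => simp [subC, h.subV_congr hστ]
  | .bind h h₁ => simp [subC, h.subC_congr hστ, h₁.subC_congr (liftSub_congr hστ)]
  | .lam _ h => simp [subC, h.subC_congr (liftSub_congr hστ)]
  | .app h hv => simp [subC, h.subC_congr hστ, hv.subV_congr hστ]
  | .pairC _ h₁ h₂ => simp [subC, h₁.subC_congr hστ, h₂.subC_congr hστ]
  | .caseC _ hv h₁ h₂ =>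
      simp [subC, hv.subV_congr hστ, h₁.subC_congr (liftSub_congr hστ),
        h₂.subC_congr (liftSub_congr hστ)]
  | .splitPC _ hv h₁ =>
      simp [subC, hv.subV_congr hστ, h₁.subC_congr (liftSub_congr (liftSub_congr hστ))]
  | .splitUC _ hv h₁ => simp [subC, hv.subV_congr hστ, h₁.subC_congr hστ]
  | .unrollPC _ _ hv h₁ => simp [subC, hv.subV_congr hστ, h₁.subC_congr (liftSub_congr hστ)]
end

theorem CTyping.subC_of_closed {P Δ M B} (h : CTyping P [] Δ M B) (σ : ℕ → Val) :
    subC σ M = M :=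
  (h.subC_congr (τ := Val.var) nofun).trans (subC_var M)

theorem CTyping.renC_of_closed {P Δ M B} (h : CTyping P [] Δ M B) (f : ℕ → ℕ) :
    renC f M = M :=
  (renC_eq_subC f M).trans (h.subC_of_closed _)

theorem CTyping.sub0C_var_zero {P A Δ M B} (h : CTyping P [A] Δ M B) :
    sub0C (.var 0) M = M :=
  (h.subC_congr (σ := sub0 (.var 0)) (τ := Val.var) fun | 0, _ => rfl).trans
    (subC_var M)

theorem VTyping.sub0V_sub0V {P A V C} (h : VTyping P [A] V C) (W W' : Val) :
    sub0V W (sub0V W' V) = sub0V (sub0V W W') V :=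
  (subV_subV _ _ V).trans (h.subV_congr fun | 0, _ => rfl)

/-! ### Plugging stacks -/

def shiftAbove (k d n : ℕ) : ℕ := if n < k then n else n + d

theorem liftN_shiftAbove (k d : ℕ) : liftN (shiftAbove k d) = shiftAbove (k + 1) d := by
  funext n
  cases n with
  | zero => simp [liftN, shiftAbove]
  | succ n => simp only [liftN, shiftAbove]; split_ifs <;> omega

theorem shiftAbove_zero (d : ℕ) : shiftAbove 0 d = (· + d) := by
  funext n; simp [shiftAbove]

theorem shiftAbove_comp_add (k d : ℕ) : shiftAbove k d ∘ (· + k) = (· + (k + d)) := by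
  funext n; simp [shiftAbove]; omega

mutual
theorem plugV_renV_shiftAbove (X : Comp) (d : ℕ) : ∀ (W : Val) (k : ℕ),
    plugV X (k + d) (renV (shiftAbove k d) W) = renV (shiftAbove k d) (plugV X k W)
  | .var _, _ | .unit, _ => rfl
  | .up _ _ V, k | .inl V, k | .inr V, k | .abortV V, k | .rollV _ V, k => by
      simp [renV, plugV, plugV_renV_shiftAbove X d V k]
  | .pair V W, k | .splitUV V W, k => by
      simp [renV, plugV, plugV_renV_shiftAbove X d V k, plugV_renV_shiftAbove X d W k]
  | .caseV V W₁ W₂, k => by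
      have h₁ := plugV_renV_shiftAbove X d W₁ (k + 1)
      have h₂ := plugV_renV_shiftAbove X d W₂ (k + 1)
      simp only [renV, plugV, liftN_shiftAbove, plugV_renV_shiftAbove X d V k]
      rw [Nat.add_right_comm, h₁, h₂]
  | .splitPV V W, k => by
      have h := plugV_renV_shiftAbove X d W (k + 2)
      simp only [renV, plugV, liftN_shiftAbove, plugV_renV_shiftAbove X d V k]
      rw [Nat.add_right_comm, h]
  | .unrollPV V W, k => by
      have h := plugV_renV_shiftAbove X d W (k + 1)
      simp only [renV, plugV, liftN_shiftAbove, plugV_renV_shiftAbove X d V k]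
      rw [Nat.add_right_comm, h]
  | .thunk M, k => by simp [renV, plugV, plugC_renC_shiftAbove X d M k]
theorem plugC_renC_shiftAbove (X : Comp) (d : ℕ) : ∀ (S : Comp) (k : ℕ),
    plugC X (k + d) (renC (shiftAbove k d) S) = renC (shiftAbove k d) (plugC X k S)
  | .hole, k => by simp only [renC, plugC, renC_renC, shiftAbove_comp_add]
  | .err, _ | .unitC, _ => rfl
  | .dn _ _ M, k | .fst M, k | .snd M, k | .rollC _ M, k | .unrollC M, k => by
      simp [renC, plugC, plugC_renC_shiftAbove X d M k]
  | .force V, k | .ret V, k | .abortC V, k => by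
      simp [renC, plugC, plugV_renV_shiftAbove X d V k]
  | .app M V, k => by
      simp [renC, plugC, plugC_renC_shiftAbove X d M k, plugV_renV_shiftAbove X d V k]
  | .pairC M N, k => by
      simp [renC, plugC, plugC_renC_shiftAbove X d M k, plugC_renC_shiftAbove X d N k]
  | .splitUC V M, k => by
      simp [renC, plugC, plugV_renV_shiftAbove X d V k, plugC_renC_shiftAbove X d M k]
  | .lam M, k => by
      have h := plugC_renC_shiftAbove X d M (k + 1)
      simp only [renC, plugC, liftN_shiftAbove]
      rw [Nat.add_right_comm, h]
  | .bind M N, k => by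
      have h := plugC_renC_shiftAbove X d N (k + 1)
      simp only [renC, plugC, liftN_shiftAbove, plugC_renC_shiftAbove X d M k]
      rw [Nat.add_right_comm, h]
  | .caseC V M₁ M₂, k => by
      have h₁ := plugC_renC_shiftAbove X d M₁ (k + 1)
      have h₂ := plugC_renC_shiftAbove X d M₂ (k + 1)
      simp only [renC, plugC, liftN_shiftAbove, plugV_renV_shiftAbove X d V k]
      rw [Nat.add_right_comm, h₁, h₂]
  | .splitPC V M, k => by
      have h := plugC_renC_shiftAbove X d M (k + 2)
      simp only [renC, plugC, liftN_shiftAbove, plugV_renV_shiftAbove X d V k]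
      rw [Nat.add_right_comm, h]
  | .unrollPC V M, k => by
      have h := plugC_renC_shiftAbove X d M (k + 1)
      simp only [renC, plugC, liftN_shiftAbove, plugV_renV_shiftAbove X d V k]
      rw [Nat.add_right_comm, h]
end

mutual
theorem plugV_plugV (X Y : Comp) :
    ∀ (W : Val) (d : ℕ), plugV X d (plugV Y d W) = plugV (plugC X 0 Y) d W
  | .var _, _ | .unit, _ => rfl
  | .up _ _ V, d | .inl V, d | .inr V, d | .abortV V, d | .rollV _ V, d => by
      simp [plugV, plugV_plugV X Y V d]
  | .pair V W, d | .splitUV V W, d => by simp [plugV, plugV_plugV X Y V d, plugV_plugV X Y W d]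
  | .caseV V W₁ W₂, d => by
      simp [plugV, plugV_plugV X Y V d, plugV_plugV X Y W₁ (d + 1), plugV_plugV X Y W₂ (d + 1)]
  | .splitPV V W, d => by simp [plugV, plugV_plugV X Y V d, plugV_plugV X Y W (d + 2)]
  | .unrollPV V W, d => by simp [plugV, plugV_plugV X Y V d, plugV_plugV X Y W (d + 1)]
  | .thunk M, d => by simp [plugV, plugC_plugC X Y M d]
theorem plugC_plugC (X Y : Comp) :
    ∀ (S : Comp) (d : ℕ), plugC X d (plugC Y d S) = plugC (plugC X 0 Y) d S
  | .hole, d => by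
      simpa [plugC, shiftAbove_zero] using plugC_renC_shiftAbove X d Y 0
  | .err, _ | .unitC, _ => rfl
  | .dn _ _ M, d | .fst M, d | .snd M, d | .rollC _ M, d | .unrollC M, d => by
      simp [plugC, plugC_plugC X Y M d]
  | .force V, d | .ret V, d | .abortC V, d => by simp [plugC, plugV_plugV X Y V d]
  | .lam M, d => by simp [plugC, plugC_plugC X Y M (d + 1)]
  | .app M V, d => by simp [plugC, plugC_plugC X Y M d, plugV_plugV X Y V d]
  | .pairC M N, d => by simp [plugC, plugC_plugC X Y M d, plugC_plugC X Y N d]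
  | .bind M N, d => by simp [plugC, plugC_plugC X Y M d, plugC_plugC X Y N (d + 1)]
  | .caseC V M₁ M₂, d => by
      simp [plugC, plugV_plugV X Y V d, plugC_plugC X Y M₁ (d + 1), plugC_plugC X Y M₂ (d + 1)]
  | .splitPC V M, d => by simp [plugC, plugV_plugV X Y V d, plugC_plugC X Y M (d + 2)]
  | .splitUC V M, d => by simp [plugC, plugV_plugV X Y V d, plugC_plugC X Y M d]
  | .unrollPC V M, d => by simp [plugC, plugV_plugV X Y V d, plugC_plugC X Y M (d + 1)]
end

theorem plug_plug (S₁ S₂ M : Comp) : plug (plug S₁ S₂) M = plug S₁ (plug S₂ M) :=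
  plugC_plugC M S₂ S₁ 0

theorem plug_hole (M : Comp) : plug .hole M = M :=
  renC_id M

/-- `V` contains no stack hole; renamings are included because hole-freeness of the
terms substituted for variables has to survive going under binders. -/
def HoleFree (V : Val) : Prop := ∀ f d M, plugV M d (renV f V) = renV f V

theorem HoleFree.plugV_eq {V : Val} (h : HoleFree V) (d : ℕ) (M : Comp) : plugV M d V = V := by
  simpa [renV_id] using h id d M

theorem holeFree_liftSub {σ : ℕ → Val} (h : ∀ n, HoleFree (σ n)) : ∀ n, HoleFree (liftSub σ n)
  | 0, _, _, _ => rfl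
  | n + 1, f, d, M => by simpa only [liftSub, renV_renV] using h n (f ∘ Nat.succ) d M

theorem holeFree_iterate_liftSub {σ : ℕ → Val} (h : ∀ n, HoleFree (σ n)) (d : ℕ) :
    ∀ n, HoleFree ((liftSub^[d] σ) n) := by
  induction d generalizing σ with
  | zero => exact h
  | succ d ih => exact ih (holeFree_liftSub h)

theorem iterate_liftSub_add (σ : ℕ → Val) (d n : ℕ) :
    (liftSub^[d] σ) (n + d) = renV (· + d) (σ n) := by
  induction d with
  | zero => exact (renV_id _).symm
  | succ d ih => rw [Function.iterate_succ_apply', ← Nat.add_assoc, liftSub, ih, renV_renV]; rfl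

mutual
theorem VTyping.plugV_renV {P Γ V A} (h : VTyping P Γ V A) (f : ℕ → ℕ) (d : ℕ) (X : Comp) :
    plugV X d (renV f V) = renV f V := by
  match h with
  | .var _ | .unit => rfl
  | .up _ h | .inl h | .inr h | .abortV _ h | .rollV _ h => simp [renV, plugV, h.plugV_renV]
  | .pair h₁ h₂ | .splitUV _ h₁ h₂ | .splitPV _ h₁ h₂ | .unrollPV _ _ h₁ h₂ =>
      simp [renV, plugV, h₁.plugV_renV, h₂.plugV_renV]
  | .caseV _ h h₁ h₂ => simp [renV, plugV, h.plugV_renV, h₁.plugV_renV, h₂.plugV_renV]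
  | .thunk h => simp [renV, plugV, h.plugC_renC rfl]
theorem CTyping.plugC_renC {P Γ Δ M B} (h : CTyping P Γ Δ M B) (hΔ : Δ = none) (f : ℕ → ℕ)
    (d : ℕ) (X : Comp) : plugC X d (renC f M) = renC f M := by
  match h with
  | .hole => cases hΔ
  | .err | .unitC _ => rfl
  | .dn _ h | .fst h | .snd h | .rollC _ h | .unrollC _ h | .lam _ h =>
      simp [renC, plugC, h.plugC_renC hΔ]
  | .force h | .ret h | .abortC _ h => simp [renC, plugC, h.plugV_renV]
  | .bind h h₁ => simp [renC, plugC, h.plugC_renC hΔ, h₁.plugC_renC rfl]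
  | .app h hv => simp [renC, plugC, h.plugC_renC hΔ, hv.plugV_renV]
  | .pairC _ h₁ h₂ => simp [renC, plugC, h₁.plugC_renC hΔ, h₂.plugC_renC hΔ]
  | .caseC _ hv h₁ h₂ => simp [renC, plugC, hv.plugV_renV, h₁.plugC_renC hΔ, h₂.plugC_renC hΔ]
  | .splitPC _ hv h₁ | .splitUC _ hv h₁ | .unrollPC _ _ hv h₁ =>
      simp [renC, plugC, hv.plugV_renV, h₁.plugC_renC hΔ]
end

theorem VTyping.holeFree {P Γ V A} (h : VTyping P Γ V A) : HoleFree V :=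
  h.plugV_renV

theorem CTyping.plugC_eq {P Γ M B} (h : CTyping P Γ none M B) (d : ℕ) (X : Comp) :
    plugC X d M = M := by
  simpa [renC_id] using h.plugC_renC rfl id d X

mutual
theorem subV_plugV {σ : ℕ → Val} (hσ : ∀ n, HoleFree (σ n)) (X : Comp) : ∀ (W : Val) (d : ℕ),
    subV (liftSub^[d] σ) (plugV X d W) = plugV (subC σ X) d (subV (liftSub^[d] σ) W)
  | .var n, d => ((holeFree_iterate_liftSub hσ d n).plugV_eq d _).symm
  | .unit, _ => rfl
  | .up _ _ V, d | .inl V, d | .inr V, d | .abortV V, d | .rollV _ V, d => by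
      simp [plugV, subV, subV_plugV hσ X V d]
  | .pair V W, d | .splitUV V W, d => by
      simp [plugV, subV, subV_plugV hσ X V d, subV_plugV hσ X W d]
  | .caseV V W₁ W₂, d => by
      have h₁ := subV_plugV hσ X W₁ (d + 1)
      have h₂ := subV_plugV hσ X W₂ (d + 1)
      simp only [Function.iterate_succ_apply'] at h₁ h₂
      simp [plugV, subV, subV_plugV hσ X V d, h₁, h₂]
  | .splitPV V W, d => by
      have h := subV_plugV hσ X W (d + 2)
      simp only [Function.iterate_succ_apply'] at h
      simp [plugV, subV, subV_plugV hσ X V d, h]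
  | .unrollPV V W, d => by
      have h := subV_plugV hσ X W (d + 1)
      simp only [Function.iterate_succ_apply'] at h
      simp [plugV, subV, subV_plugV hσ X V d, h]
  | .thunk M, d => by simp [plugV, subV, subC_plugC hσ X M d]
theorem subC_plugC {σ : ℕ → Val} (hσ : ∀ n, HoleFree (σ n)) (X : Comp) : ∀ (S : Comp) (d : ℕ),
    subC (liftSub^[d] σ) (plugC X d S) = plugC (subC σ X) d (subC (liftSub^[d] σ) S)
  | .hole, d => by
      have h : liftSub^[d] σ ∘ (· + d) = renV (· + d) ∘ σ := funext (iterate_liftSub_add σ d)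
      simp only [plugC, subC, subC_renC, renC_subC, h]
  | .err, _ | .unitC, _ => rfl
  | .dn _ _ M, d | .fst M, d | .snd M, d | .rollC _ M, d | .unrollC M, d => by
      simp [plugC, subC, subC_plugC hσ X M d]
  | .force V, d | .ret V, d | .abortC V, d => by simp [plugC, subC, subV_plugV hσ X V d]
  | .app M V, d => by simp [plugC, subC, subC_plugC hσ X M d, subV_plugV hσ X V d]
  | .pairC M N, d => by simp [plugC, subC, subC_plugC hσ X M d, subC_plugC hσ X N d]
  | .splitUC V M, d => by simp [plugC, subC, subV_plugV hσ X V d, subC_plugC hσ X M d]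
  | .lam M, d => by
      have h := subC_plugC hσ X M (d + 1)
      simp only [Function.iterate_succ_apply'] at h
      simp [plugC, subC, h]
  | .bind M N, d => by
      have h := subC_plugC hσ X N (d + 1)
      simp only [Function.iterate_succ_apply'] at h
      simp [plugC, subC, subC_plugC hσ X M d, h]
  | .caseC V M₁ M₂, d => by
      have h₁ := subC_plugC hσ X M₁ (d + 1)
      have h₂ := subC_plugC hσ X M₂ (d + 1)
      simp only [Function.iterate_succ_apply'] at h₁ h₂
      simp [plugC, subC, subV_plugV hσ X V d, h₁, h₂]
  | .splitPC V M, d => by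
      have h := subC_plugC hσ X M (d + 2)
      simp only [Function.iterate_succ_apply'] at h
      simp [plugC, subC, subV_plugV hσ X V d, h]
  | .unrollPC V M, d => by
      have h := subC_plugC hσ X M (d + 1)
      simp only [Function.iterate_succ_apply'] at h
      simp [plugC, subC, subV_plugV hσ X V d, h]
end

theorem sub0C_plug {P Γ V A Δ S B} (hV : VTyping P Γ V A) (hS : CTyping P [] Δ S B)
    (M : Comp) : sub0C V (plug S M) = plug S (sub0C V M) := by
  have hσ : ∀ n, HoleFree (sub0 V n) := fun | 0 => hV.holeFree | _ + 1 => fun _ _ _ => rfl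
  simpa [sub0C, plug, hS.subC_of_closed] using subC_plugC hσ M S 0

/-- The stoup of `plug S M`, given the stoup `Δ` of `M` and the stoup `Δ₀` of `S`. -/
def plugStoup (Δ : Option CTy) : Option CTy → Option CTy
  | none => none
  | some _ => Δ

mutual
theorem VTyping.plugV {P Γ₀ W A} (h : VTyping P Γ₀ W A) (hcx : P.cx) {Γ Δ M B}
    (hM : CTyping P Γ Δ M B) (Ξ : Ctx) (hΓ : Γ₀ = Ξ ++ Γ) :
    VTyping P Γ₀ (plugV M Ξ.length W) A := by
  subst hΓ
  match h with
  | .var hg => exact .var hg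
  | .up hu h => exact .up hu (h.plugV hcx hM Ξ rfl)
  | .unit => exact .unit
  | .inl h => exact .inl (h.plugV hcx hM Ξ rfl)
  | .inr h => exact .inr (h.plugV hcx hM Ξ rfl)
  | .pair h₁ h₂ => exact .pair (h₁.plugV hcx hM Ξ rfl) (h₂.plugV hcx hM Ξ rfl)
  | .abortV hc h => exact .abortV hc (h.plugV hcx hM Ξ rfl)
  | .caseV hc h h₁ h₂ =>
      exact .caseV hc (h.plugV hcx hM Ξ rfl) (h₁.plugV hcx hM (_ :: Ξ) rfl)
        (h₂.plugV hcx hM (_ :: Ξ) rfl)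
  | .splitPV hc h h₁ => exact .splitPV hc (h.plugV hcx hM Ξ rfl) (h₁.plugV hcx hM (_ :: _ :: Ξ) rfl)
  | .splitUV hc h h₁ => exact .splitUV hc (h.plugV hcx hM Ξ rfl) (h₁.plugV hcx hM Ξ rfl)
  | .rollV hr h => exact .rollV hr (h.plugV hcx hM Ξ rfl)
  | .unrollPV hc hr h h₁ =>
      exact .unrollPV hc hr (h.plugV hcx hM Ξ rfl) (h₁.plugV hcx hM (_ :: Ξ) rfl)
  | .thunk h => exact .thunk (h.plugC hcx hM Ξ rfl (.inr rfl))
theorem CTyping.plugC {P Γ₀ Δ₀ S B'} (h : CTyping P Γ₀ Δ₀ S B') (hcx : P.cx) {Γ Δ M B}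
    (hM : CTyping P Γ Δ M B) (Ξ : Ctx) (hΓ : Γ₀ = Ξ ++ Γ) (hΔ₀ : Δ₀ = some B ∨ Δ₀ = none) :
    CTyping P Γ₀ (plugStoup Δ Δ₀) (plugC M Ξ.length S) B' := by
  subst hΓ
  match h with
  | .hole =>
      obtain rfl : B' = B := by simpa using hΔ₀
      exact hM.ren (isRenaming_append_left Γ Ξ)
  | .err => exact .err
  | .dn hd h => exact .dn hd (h.plugC hcx hM Ξ rfl hΔ₀)
  | .force h => exact .force (h.plugV hcx hM Ξ rfl)
  | .ret h => exact .ret (h.plugV hcx hM Ξ rfl)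
  | .bind h h₁ => exact .bind (h.plugC hcx hM Ξ rfl hΔ₀) (h₁.plugC hcx hM (_ :: Ξ) rfl (.inr rfl))
  | .lam _ h => exact .lam (.inr hcx) (h.plugC hcx hM (_ :: Ξ) rfl hΔ₀)
  | .app h hv => exact .app (h.plugC hcx hM Ξ rfl hΔ₀) (hv.plugV hcx hM Ξ rfl)
  | .unitC _ => exact .unitC (.inr hcx)
  | .pairC _ h₁ h₂ =>
      exact .pairC (.inr hcx) (h₁.plugC hcx hM Ξ rfl hΔ₀) (h₂.plugC hcx hM Ξ rfl hΔ₀)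
  | .fst h => exact .fst (h.plugC hcx hM Ξ rfl hΔ₀)
  | .snd h => exact .snd (h.plugC hcx hM Ξ rfl hΔ₀)
  | .abortC _ hv => exact .abortC (.inr hcx) (hv.plugV hcx hM Ξ rfl)
  | .caseC _ hv h₁ h₂ =>
      exact .caseC (.inr hcx) (hv.plugV hcx hM Ξ rfl) (h₁.plugC hcx hM (_ :: Ξ) rfl hΔ₀)
        (h₂.plugC hcx hM (_ :: Ξ) rfl hΔ₀)
  | .splitPC _ hv h₁ =>
      exact .splitPC (.inr hcx) (hv.plugV hcx hM Ξ rfl) (h₁.plugC hcx hM (_ :: _ :: Ξ) rfl hΔ₀)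
  | .splitUC _ hv h₁ =>
      exact .splitUC (.inr hcx) (hv.plugV hcx hM Ξ rfl) (h₁.plugC hcx hM Ξ rfl hΔ₀)
  | .unrollPC _ hr hv h₁ =>
      exact .unrollPC (.inr hcx) hr (hv.plugV hcx hM Ξ rfl) (h₁.plugC hcx hM (_ :: Ξ) rfl hΔ₀)
  | .rollC hr h => exact .rollC hr (h.plugC hcx hM Ξ rfl hΔ₀)
  | .unrollC hr h => exact .unrollC hr (h.plugC hcx hM Ξ rfl hΔ₀)
end

theorem CTyping.plug {P Γ Δ S M B B'} (hS : CTyping P [] (some B) S B') (hcx : P.cx)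
    (hM : CTyping P Γ Δ M B) : CTyping P Γ Δ (plug S M) B' :=
  (hS.weaken Γ).plugC hcx hM [] rfl (.inl rfl)

theorem plug_bind {P Γ N B} (hN : CTyping P Γ none N B) (S M : Comp) :
    plug (.bind S N) M = .bind (plug S M) N := by
  simp [plug, plugC, hN.plugC_eq]

/-! ### Weakening of term dynamism -/

def Policy.CastFree (P : Policy) : Prop :=
  (∀ A A', ¬P.up A A') ∧ ∀ B B', ¬P.dn B B'

theorem cbpvStarP_castFree : cbpvStarP.CastFree :=
  ⟨fun _ _ => id, fun _ _ => id⟩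

theorem CtxDyn.refl : ∀ Γ : Ctx, CtxDyn Γ Γ
  | [] => .nil
  | A :: Γ => .cons (VDyn.refl A) (CtxDyn.refl Γ)

theorem CtxDyn.append {Γ Γ' : Ctx} (h : CtxDyn Γ Γ') (Ξ : Ctx) : CtxDyn (Γ ++ Ξ) (Γ' ++ Ξ) :=
  List.rel_append h (CtxDyn.refl Ξ)

mutual
theorem VLe.weaken {P Γ Γ' V V' A A'} (hP : P.CastFree) (h : VLe P Γ Γ' V V' A A')
    (Ξ : Ctx) : VLe P (Γ ++ Ξ) (Γ' ++ Ξ) V V' A A' :=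
  match h with
  | .refl h => .refl (h.weaken Ξ)
  | .trans h₁ h₂ => .trans (h₁.weaken hP Ξ) (h₂.weaken hP Ξ)
  | .var hd hg hg' =>
      .var (hd.append Ξ) (isRenaming_append _ Ξ _ _ hg) (isRenaming_append _ Ξ _ _ hg')
  | .substVV h₁ h₂ => .substVV (h₁.weaken hP Ξ) (h₂.weaken hP Ξ)
  | .inlCong h hd => .inlCong (h.weaken hP Ξ) hd
  | .inrCong hd h => .inrCong hd (h.weaken hP Ξ)
  | .unitCong hd => .unitCong (hd.append Ξ)
  | .pairCong h₁ h₂ => .pairCong (h₁.weaken hP Ξ) (h₂.weaken hP Ξ)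
  | .thunkCong h => .thunkCong (h.weaken hP Ξ)
  | .abortVCong hcx hd h => .abortVCong hcx hd (h.weaken hP Ξ)
  | .caseVCong hcx h h₁ h₂ => .caseVCong hcx (h.weaken hP Ξ) (h₁.weaken hP Ξ) (h₂.weaken hP Ξ)
  | .splitPVCong hcx h h₁ => .splitPVCong hcx (h.weaken hP Ξ) (h₁.weaken hP Ξ)
  | .splitUVCong hcx h h₁ => .splitUVCong hcx (h.weaken hP Ξ) (h₁.weaken hP Ξ)
  | .rollVCong hr h => .rollVCong hr (h.weaken hP Ξ)
  | .unrollPVCong hcx hr h h₁ => .unrollPVCong hcx hr (h.weaken hP Ξ) (h₁.weaken hP Ξ)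
  | .upBound hu | .upBest hu => (hP.1 _ _ hu).elim
  | .sumVBetaL hcx hV h₁ h₂ => .sumVBetaL hcx (hV.weaken Ξ) (h₁.weaken Ξ) (h₂.weaken Ξ)
  | .sumVBetaL' hcx hV h₁ h₂ => .sumVBetaL' hcx (hV.weaken Ξ) (h₁.weaken Ξ) (h₂.weaken Ξ)
  | .sumVBetaR hcx hV h₁ h₂ => .sumVBetaR hcx (hV.weaken Ξ) (h₁.weaken Ξ) (h₂.weaken Ξ)
  | .sumVBetaR' hcx hV h₁ h₂ => .sumVBetaR' hcx (hV.weaken Ξ) (h₁.weaken Ξ) (h₂.weaken Ξ)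
  | .sumVEta hcx hW => .sumVEta hcx (hW.weaken Ξ)
  | .sumVEta' hcx hW => .sumVEta' hcx (hW.weaken Ξ)
  | .zeroVEta hcx hW => .zeroVEta hcx (hW.weaken Ξ)
  | .zeroVEta' hcx hW => .zeroVEta' hcx (hW.weaken Ξ)
  | .prodVBeta hcx h₁ h₂ hW => .prodVBeta hcx (h₁.weaken Ξ) (h₂.weaken Ξ) (hW.weaken Ξ)
  | .prodVBeta' hcx h₁ h₂ hW => .prodVBeta' hcx (h₁.weaken Ξ) (h₂.weaken Ξ) (hW.weaken Ξ)
  | .prodVEta hcx hW => .prodVEta hcx (hW.weaken Ξ)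
  | .prodVEta' hcx hW => .prodVEta' hcx (hW.weaken Ξ)
  | .oneVBeta hcx hW => .oneVBeta hcx (hW.weaken Ξ)
  | .oneVBeta' hcx hW => .oneVBeta' hcx (hW.weaken Ξ)
  | .oneVEta hcx hW => .oneVEta hcx (hW.weaken Ξ)
  | .oneVEta' hcx hW => .oneVEta' hcx (hW.weaken Ξ)
  | .muVBeta hcx hr hV hW => .muVBeta hcx hr (hV.weaken Ξ) (hW.weaken Ξ)
  | .muVBeta' hcx hr hV hW => .muVBeta' hcx hr (hV.weaken Ξ) (hW.weaken Ξ)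
  | .muVEta hcx hr hW => .muVEta hcx hr (hW.weaken Ξ)
  | .muVEta' hcx hr hW => .muVEta' hcx hr (hW.weaken Ξ)
  | .uEta hV => .uEta (hV.weaken Ξ)
  | .uEta' hV => .uEta' (hV.weaken Ξ)
theorem CLe.weaken {P Γ Γ' Δ Δ' M M' B B'} (hP : P.CastFree) (h : CLe P Γ Γ' Δ Δ' M M' B B')
    (Ξ : Ctx) : CLe P (Γ ++ Ξ) (Γ' ++ Ξ) Δ Δ' M M' B B' :=
  match h with
  | .refl h => .refl (h.weaken Ξ)
  | .trans h₁ h₂ => .trans (h₁.weaken hP Ξ) (h₂.weaken hP Ξ)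
  | .hole hd hc => .hole (hd.append Ξ) hc
  | .substVC h₁ h₂ => .substVC (h₁.weaken hP Ξ) (h₂.weaken hP Ξ)
  | .plugCong h₁ h₂ => .plugCong (h₁.weaken hP Ξ) (h₂.weaken hP Ξ)
  | .errBot hd hc hM => .errBot (hd.append Ξ) hc (hM.weaken Ξ)
  | .errStrict hS => .errStrict (hS.weaken Ξ)
  | .forceCong h => .forceCong (h.weaken hP Ξ)
  | .retCong h => .retCong (h.weaken hP Ξ)
  | .bindCong h₁ h₂ => .bindCong (h₁.weaken hP Ξ) (h₂.weaken hP Ξ)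
  | .lamCong hs hd h => .lamCong hs hd (h.weaken hP Ξ)
  | .appCong h₁ h₂ => .appCong (h₁.weaken hP Ξ) (h₂.weaken hP Ξ)
  | .unitCCong hs hd hsd => .unitCCong hs (hd.append Ξ) hsd
  | .pairCCong hs h₁ h₂ => .pairCCong hs (h₁.weaken hP Ξ) (h₂.weaken hP Ξ)
  | .fstCong h => .fstCong (h.weaken hP Ξ)
  | .sndCong h => .sndCong (h.weaken hP Ξ)
  | .abortCCong hs hsd hc h => .abortCCong hs hsd hc (h.weaken hP Ξ)
  | .caseCCong hs h h₁ h₂ => .caseCCong hs (h.weaken hP Ξ) (h₁.weaken hP Ξ) (h₂.weaken hP Ξ)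
  | .splitPCCong hs h h₁ => .splitPCCong hs (h.weaken hP Ξ) (h₁.weaken hP Ξ)
  | .splitUCCong hs h h₁ => .splitUCCong hs (h.weaken hP Ξ) (h₁.weaken hP Ξ)
  | .unrollPCCong hs hr h h₁ => .unrollPCCong hs hr (h.weaken hP Ξ) (h₁.weaken hP Ξ)
  | .rollCCong hr h => .rollCCong hr (h.weaken hP Ξ)
  | .unrollCCong hr h => .unrollCCong hr (h.weaken hP Ξ)
  | .dnBound hd | .dnBest hd => (hP.2 _ _ hd).elim
  | .retractF hu _ | .retractU hu _ => (hP.1 _ _ hu).elim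
  | .sumCBetaL hs hV h₁ h₂ => .sumCBetaL hs (hV.weaken Ξ) (h₁.weaken Ξ) (h₂.weaken Ξ)
  | .sumCBetaL' hs hV h₁ h₂ => .sumCBetaL' hs (hV.weaken Ξ) (h₁.weaken Ξ) (h₂.weaken Ξ)
  | .sumCBetaR hs hV h₁ h₂ => .sumCBetaR hs (hV.weaken Ξ) (h₁.weaken Ξ) (h₂.weaken Ξ)
  | .sumCBetaR' hs hV h₁ h₂ => .sumCBetaR' hs (hV.weaken Ξ) (h₁.weaken Ξ) (h₂.weaken Ξ)
  | .sumCEta hs hM => .sumCEta hs (hM.weaken Ξ)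
  | .sumCEta' hs hM => .sumCEta' hs (hM.weaken Ξ)
  | .zeroCEta hs hM => .zeroCEta hs (hM.weaken Ξ)
  | .zeroCEta' hs hM => .zeroCEta' hs (hM.weaken Ξ)
  | .prodCBeta hs h₁ h₂ hM => .prodCBeta hs (h₁.weaken Ξ) (h₂.weaken Ξ) (hM.weaken Ξ)
  | .prodCBeta' hs h₁ h₂ hM => .prodCBeta' hs (h₁.weaken Ξ) (h₂.weaken Ξ) (hM.weaken Ξ)
  | .prodCEta hs hM => .prodCEta hs (hM.weaken Ξ)
  | .prodCEta' hs hM => .prodCEta' hs (hM.weaken Ξ)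
  | .oneCBeta hs hM => .oneCBeta hs (hM.weaken Ξ)
  | .oneCBeta' hs hM => .oneCBeta' hs (hM.weaken Ξ)
  | .oneCEta hs hM => .oneCEta hs (hM.weaken Ξ)
  | .oneCEta' hs hM => .oneCEta' hs (hM.weaken Ξ)
  | .muCBeta hs hr hV hM => .muCBeta hs hr (hV.weaken Ξ) (hM.weaken Ξ)
  | .muCBeta' hs hr hV hM => .muCBeta' hs hr (hV.weaken Ξ) (hM.weaken Ξ)
  | .muCEta hs hr hM => .muCEta hs hr (hM.weaken Ξ)
  | .muCEta' hs hr hM => .muCEta' hs hr (hM.weaken Ξ)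
  | .uBeta hM => .uBeta (hM.weaken Ξ)
  | .uBeta' hM => .uBeta' (hM.weaken Ξ)
  | .fBeta hV hN => .fBeta (hV.weaken Ξ) (hN.weaken Ξ)
  | .fBeta' hV hN => .fBeta' (hV.weaken Ξ) (hN.weaken Ξ)
  | .fEta hM => .fEta (hM.weaken Ξ)
  | .fEta' hM => .fEta' (hM.weaken Ξ)
  | .arrBeta hs hM hV => .arrBeta hs (hM.weaken Ξ) (hV.weaken Ξ)
  | .arrBeta' hs hM hV => .arrBeta' hs (hM.weaken Ξ) (hV.weaken Ξ)
  | .arrEta hs hM => .arrEta hs (hM.weaken Ξ)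
  | .arrEta' hs hM => .arrEta' hs (hM.weaken Ξ)
  | .wthBeta1 hs h₁ h₂ => .wthBeta1 hs (h₁.weaken Ξ) (h₂.weaken Ξ)
  | .wthBeta1' hs h₁ h₂ => .wthBeta1' hs (h₁.weaken Ξ) (h₂.weaken Ξ)
  | .wthBeta2 hs h₁ h₂ => .wthBeta2 hs (h₁.weaken Ξ) (h₂.weaken Ξ)
  | .wthBeta2' hs h₁ h₂ => .wthBeta2' hs (h₁.weaken Ξ) (h₂.weaken Ξ)
  | .wthEta hs hM => .wthEta hs (hM.weaken Ξ)
  | .wthEta' hs hM => .wthEta' hs (hM.weaken Ξ)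
  | .topEta hs hM => .topEta hs (hM.weaken Ξ)
  | .topEta' hs hM => .topEta' hs (hM.weaken Ξ)
  | .nuBeta hr hM => .nuBeta hr (hM.weaken Ξ)
  | .nuBeta' hr hM => .nuBeta' hr (hM.weaken Ξ)
  | .nuEta hr hM => .nuEta hr (hM.weaken Ξ)
  | .nuEta' hr hM => .nuEta' hr (hM.weaken Ξ)
end

/-! ### Derived rules -/

section EquationalReasoning

variable {P : Policy}

theorem CEquiv.trans {Γ Δ M₁ M₂ M₃ B} (h₁ : CEquiv P Γ Δ M₁ M₂ B) (h₂ : CEquiv P Γ Δ M₂ M₃ B) :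
    CEquiv P Γ Δ M₁ M₃ B :=
  ⟨h₁.1.trans h₂.1, h₂.2.trans h₁.2⟩

theorem CEquiv.plug {Γ Δ M M' S B B'} (h : CEquiv P Γ Δ M M' B)
    (hS : CTyping P Γ (some B) S B') : CEquiv P Γ Δ (plug S M) (plug S M') B' :=
  ⟨.plugCong h.1 (.refl hS), .plugCong h.2 (.refl hS)⟩

theorem CEquiv.subst0 (hP : P.CastFree) {Γ A V M M' B} (h : CEquiv P [A] none M M' B)
    (hV : VTyping P Γ V A) : CEquiv P Γ none (sub0C V M) (sub0C V M') B :=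
  ⟨.substVC (.refl hV) (h.1.weaken hP Γ), .substVC (.refl hV) (h.2.weaken hP Γ)⟩

theorem VLe.subst0 (hP : P.CastFree) {Γ A V W W' C} (h : VLe P [A] [A] W W' C C)
    (hV : VTyping P Γ V A) : VLe P Γ Γ (sub0V V W) (sub0V V W') C C :=
  .substVV (.refl hV) (h.weaken hP Γ)

theorem VLe.subst0_left {Γ A V V' W C} (h : VLe P Γ Γ V V' A A) (hW : VTyping P [A] W C) :
    VLe P Γ Γ (sub0V V W) (sub0V V' W) C C :=
  .substVV h (.refl (hW.weaken Γ))

theorem VTyping.subst0 {Γ A V W C} (hW : VTyping P [A] W C) (hV : VTyping P Γ V A) :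
    VTyping P Γ (sub0V V W) C :=
  hW.sub (isSubst_sub0 hV)

theorem bind_hole_bind_le_bind_bind_hole {A A' B N K} (hN : CTyping P [A] none N (.F A'))
    (hK : CTyping P [A'] none K B) :
    CLe P [] [] (some (.F A)) (some (.F A)) (.bind .hole (.bind N K)) (.bind (.bind .hole N) K)
      B B := by
  have hU : CTyping P [] (some (.F A)) (.bind (.bind .hole N) K) B := .bind (.bind .hole hN) hK
  have hη := CLe.fEta' hU
  rw [hU.renC_of_closed, plug_bind hK, plug_bind hN, plug_hole] at hη
  have hβ : CLe P [A] [A] none none N (.bind (.ret (.var 0)) N) (.F A') (.F A') := by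
    simpa [hN.sub0C_var_zero] using CLe.fBeta' (.var (n := 0) rfl) (hN.weaken [A])
  exact .trans (.bindCong (.hole (CtxDyn.refl []) (CDyn.refl _))
    (.bindCong hβ (.refl (hK.weaken [A])))) hη

end EquationalReasoning

/-! ### Composition of ep pairs -/

section EPPairs

variable {P : Policy}

/-- `E` is `ret` for value ep pairs and `force` for computation ep pairs. -/
theorem retraction_comp (hP : P.CastFree) {E : Val → Comp}
    (hE : ∀ V W, sub0C V (E W) = E (sub0V V W)) {X₁ X₂ : VTy} {C₁ C₂ C₃ : CTy} {V₁ V₂ S₁ S₂}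
    (hV₁ : VTyping P [X₁] V₁ X₂) (hS₁ : CTyping P [] (some C₂) S₁ C₁)
    (hS₂ : CTyping P [] (some C₃) S₂ C₂)
    (h₁ : CEquiv P [X₁] none (E (.var 0)) (plug S₁ (E V₁)) C₁)
    (h₂ : CEquiv P [X₂] none (E (.var 0)) (plug S₂ (E V₂)) C₂) :
    CEquiv P [X₁] none (E (.var 0)) (plug (plug S₁ S₂) (E (sub0V V₁ V₂))) C₁ := by
  have h₂' := h₂.subst0 hP hV₁
  rw [hE, sub0C_plug hV₁ hS₂, hE] at h₂'
  rw [plug_plug]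
  exact h₁.trans (h₂'.plug (hS₁.weaken [X₁]))

theorem bind_projection_comp {A₁ A₂ A₃ V₁ V₂ S₁ S₂} (hV₁ : VTyping P [A₁] V₁ A₂)
    (hV₂ : VTyping P [A₂] V₂ A₃) (hS₁ : CTyping P [] (some (.F A₂)) S₁ (.F A₁))
    (hS₂ : CTyping P [] (some (.F A₃)) S₂ (.F A₂))
    (h₁ : CLe P [] [] (some (.F A₂)) (some (.F A₂)) (.bind S₁ (.ret V₁)) .hole (.F A₂) (.F A₂))
    (h₂ : CLe P [] [] (some (.F A₃)) (some (.F A₃)) (.bind S₂ (.ret V₂)) .hole (.F A₃) (.F A₃)) :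
    CLe P [] [] (some (.F A₃)) (some (.F A₃)) (.bind (plug S₁ S₂) (.ret (sub0V V₁ V₂))) .hole
      (.F A₃) (.F A₃) := by
  have hβ : CLe P [A₁] [A₁] none none (.ret (sub0V V₁ V₂)) (.bind (.ret V₁) (.ret V₂))
      (.F A₃) (.F A₃) :=
    .fBeta' hV₁ (.ret (hV₂.weaken [A₁]))
  have hassoc := CLe.plugCong (.refl hS₁)
    (bind_hole_bind_le_bind_bind_hole (.ret hV₁) (.ret hV₂))
  rw [plug_bind (.ret hV₂), plug_bind (.bind (.ret hV₁) (.ret (hV₂.weaken [A₁]))),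
    plug_bind (.ret hV₁), plug_hole] at hassoc
  have hinner : CLe P [] [] (some (.F A₂)) (some (.F A₂)) (.bind S₁ (.ret (sub0V V₁ V₂)))
      (.bind .hole (.ret V₂)) (.F A₃) (.F A₃) :=
    (CLe.bindCong (.refl hS₁) hβ).trans (hassoc.trans (.bindCong h₁ (.refl (.ret hV₂))))
  have houter := CLe.plugCong (.refl hS₂) hinner
  rw [plug_bind (.ret (hV₂.subst0 hV₁)), plug_bind (.ret hV₂), plug_hole] at houter
  exact houter.trans h₂

theorem thunk_projection_comp (hP : P.CastFree) (hcx : P.cx) {B₁ B₂ B₃ V₁ V₂ S₁ S₂}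
    (hV₁ : VTyping P [.U B₁] V₁ (.U B₂)) (hV₂ : VTyping P [.U B₂] V₂ (.U B₃))
    (hS₁ : CTyping P [] (some B₂) S₁ B₁) (hS₂ : CTyping P [] (some B₃) S₂ B₂)
    (h₁ : VLe P [.U B₂] [.U B₂] (sub0V (.thunk (plug S₁ (.force (.var 0)))) V₁) (.var 0)
      (.U B₂) (.U B₂))
    (h₂ : VLe P [.U B₃] [.U B₃] (sub0V (.thunk (plug S₂ (.force (.var 0)))) V₂) (.var 0)
      (.U B₃) (.U B₃)) :
    VLe P [.U B₃] [.U B₃] (sub0V (.thunk (plug (plug S₁ S₂) (.force (.var 0)))) (sub0V V₁ V₂))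
      (.var 0) (.U B₃) (.U B₃) := by
  set W := Val.thunk (plug S₂ (.force (.var 0)))
  have hM : CTyping P [.U B₃] none (plug S₂ (.force (.var 0))) B₂ :=
    hS₂.plug hcx (.force (.var rfl))
  have hW : VTyping P [.U B₃] W (.U B₂) := .thunk hM
  have hβ : VLe P [.U B₃] [.U B₃] (.thunk (plug S₁ (plug S₂ (.force (.var 0)))))
      (.thunk (plug S₁ (.force W))) (.U B₁) (.U B₁) :=
    .thunkCong (.plugCong (.uBeta' hM) (.refl (hS₁.weaken _)))
  have hsub : sub0V W (.thunk (plug S₁ (.force (.var 0)))) = .thunk (plug S₁ (.force W)) :=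
    congrArg Val.thunk (sub0C_plug hW hS₁ _)
  have hinner : VLe P [.U B₃] [.U B₃] (sub0V (.thunk (plug S₁ (plug S₂ (.force (.var 0))))) V₁)
      W (.U B₂) (.U B₂) := by
    have h₁' := h₁.subst0 hP hW
    rw [hV₁.sub0V_sub0V, hsub] at h₁'
    exact (hβ.subst0_left hV₁).trans h₁'
  rw [plug_plug, hV₂.sub0V_sub0V]
  exact (hinner.subst0_left hV₂).trans h₂

end EPPairs

theorem ValEP.comp {A₁ A₂ A₃ V₁ V₂ S₁ S₂} (h₁ : ValEP A₁ A₂ V₁ S₁) (h₂ : ValEP A₂ A₃ V₂ S₂) :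
    ValEP A₁ A₃ (sub0V V₁ V₂) (plug S₁ S₂) := by
  obtain ⟨hV₁, hS₁, hr₁, hp₁⟩ := h₁
  obtain ⟨hV₂, hS₂, hr₂, hp₂⟩ := h₂
  exact ⟨hV₂.subst0 hV₁, hS₁.plug trivial hS₂,
    retraction_comp cbpvStarP_castFree (fun _ _ => rfl) hV₁ hS₁ hS₂ hr₁ hr₂,
    bind_projection_comp hV₁ hV₂ hS₁ hS₂ hp₁ hp₂⟩

theorem CompEP.comp {B₁ B₂ B₃ V₁ V₂ S₁ S₂} (h₁ : CompEP B₁ B₂ V₁ S₁)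
    (h₂ : CompEP B₂ B₃ V₂ S₂) : CompEP B₁ B₃ (sub0V V₁ V₂) (plug S₁ S₂) := by
  obtain ⟨hV₁, hS₁, hr₁, hp₁⟩ := h₁
  obtain ⟨hV₂, hS₂, hr₂, hp₂⟩ := h₂
  exact ⟨hV₂.subst0 hV₁, hS₁.plug trivial hS₂,
    retraction_comp cbpvStarP_castFree (fun _ _ => rfl) hV₁ hS₁ hS₂ hr₁ hr₂,
    thunk_projection_comp cbpvStarP_castFree trivial hV₁ hV₂ hS₁ hS₂ hp₁ hp₂⟩

/-- Lemma: EP Pairs Compose.  In CBPV*: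
(1) if `(V₁, S₁)` is a value ep pair from `A₁` to `A₂` and `(V₂, S₂)` is a
value ep pair from `A₂` to `A₃`, then `(V₂[V₁], S₁[S₂])` is a value ep pair
from `A₁` to `A₃`; and
(2) likewise for computation ep pairs. -/
theorem ep_pairs_compose :
    (∀ (A₁ A₂ A₃ : VTy) (V₁ V₂ : Val) (S₁ S₂ : Comp),
      ValEP A₁ A₂ V₁ S₁ → ValEP A₂ A₃ V₂ S₂ →
      ValEP A₁ A₃ (sub0V V₁ V₂) (plug S₁ S₂)) ∧
    (∀ (B₁ B₂ B₃ : CTy) (V₁ V₂ : Val) (S₁ S₂ : Comp),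
      CompEP B₁ B₂ V₁ S₁ → CompEP B₂ B₃ V₂ S₂ →
      CompEP B₁ B₃ (sub0V V₁ V₂) (plug S₁ S₂)) :=
  ⟨fun _ _ _ _ _ _ _ => ValEP.comp, fun _ _ _ _ _ _ _ => CompEP.comp⟩

end GTTPaper
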